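/- arXiv:1411.3307 — 6 statements merged into one kernel-verified Lean document; each statement's English description precedes it below -/
import Mathlib

section
/- Let λ, λ̂ be partitions of n and μ, μ̂ partitions of n−1 such that λ̂ is obtained from λ by moving a box from row i to row î with î > i, μ̂ is obtained from μ by the same move, and λ is obtained from μ by adding a box in position (r,c) with r < i (likewise λ̂ from μ̂ by adding the same box (r,c)). Then for any N ≥ ℓ(λ̂), s_λ(1^N)·s_{μ̂}(1^N) ≥ s_{λ̂}(1^N)·s_μ(1^N). -/
/-!
By the Weyl dimension formula, `(∏_{b<N} b!) · s_λ(1^N)` is the Vandermonde determinant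
`Δ(λ) = ∏_{a<b<N} ((b - λ_b) - (a - λ_a))`. It follows by induction on `N`: deleting the
entries `N + 1` of a tableau leaves a tableau whose shape interlaces `λ` (branching rule), and
the sum of a Vandermonde determinant over an interlacing box is a discrete integral, evaluated
by expressing the determinant through falling factorials, which telescope.

In `Δ(λ̂) Δ(μ)` and `Δ(λ) Δ(μ̂)` all factors agree except those of the row pairs `(r, i)` and
`(r, î)`. With `X = (i - λ_i) - (r - λ_r)` and `Y = (î - λ_î) - (r - λ_r) - 1` these contribute
`(X² - 1) Y²` and `X² (Y² - 1)` respectively, and `0 ≤ X ≤ Y`.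
-/

open scoped BigOperators

def isPartition (f : ℕ → ℕ) : Prop :=
  (∀ ⦃a b : ℕ⦄, a ≤ b → f b ≤ f a) ∧ ∃ N, ∀ a, N ≤ a → f a = 0

noncomputable def psize (f : ℕ → ℕ) : ℕ := ∑ᶠ a, f a

def addBox (mu lam : ℕ → ℕ) : Prop := ∃ r, lam = Function.update mu r (mu r + 1)

noncomputable def dimY (lam : ℕ → ℕ) : ℕ :=
  Set.ncard { p : ℕ → ℕ → ℕ |
    p 0 = (fun _ => 0) ∧ (∀ k, isPartition (p k)) ∧
    (∀ k, k < psize lam → addBox (p k) (p (k + 1))) ∧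
    (∀ k, psize lam ≤ k → p k = lam) }

def dominates (lam mu : ℕ → ℕ) : Prop :=
  ∀ k, ∑ a ∈ Finset.range k, mu a ≤ ∑ a ∈ Finset.range k, lam a

def moveBox (lam hatlam : ℕ → ℕ) (i hi : ℕ) : Prop :=
  lam i = hatlam i + 1 ∧ hatlam hi = lam hi + 1 ∧
  ∀ a, a ≠ i → a ≠ hi → lam a = hatlam a

noncomputable def schurOnes (N : ℕ) (lam : ℕ → ℕ) : ℕ :=
  Set.ncard { T : ℕ → ℕ → ℕ |
    (∀ i j, j < lam i → 1 ≤ T i j ∧ T i j ≤ N) ∧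
    (∀ i j, j + 1 < lam i → T i j ≤ T i (j + 1)) ∧
    (∀ i j, j < lam (i + 1) → T i j < T (i + 1) j) ∧
    (∀ i j, lam i ≤ j → T i j = 0) }

noncomputable def projStep (rho : (ℕ → ℕ) → ℝ) : (ℕ → ℕ) → ℝ :=
  fun mu => ∑ᶠ l ∈ { l : ℕ → ℕ | addBox mu l }, ((dimY mu : ℝ) / (dimY l : ℝ)) * rho l

def isMeasureOn (m : ℕ) (rho : (ℕ → ℕ) → ℝ) : Prop :=
  (∀ f, 0 ≤ rho f) ∧ ∀ f, rho f ≠ 0 → isPartition f ∧ psize f = m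

def stochDom (m : ℕ) (rho rho' : (ℕ → ℕ) → ℝ) : Prop :=
  ∀ U : Set (ℕ → ℕ),
    (∀ a ∈ U, ∀ b, isPartition b → psize b = m → dominates b a → b ∈ U) →
    ∑ᶠ f ∈ U, rho' f ≤ ∑ᶠ f ∈ U, rho f

open Finset Matrix Polynomial
open scoped Nat

theorem descPochhammer_eval_add_one_sub {R : Type*} [CommRing R] (k : ℕ) (x : R) :
    (descPochhammer R (k + 1)).eval (x + 1) - (descPochhammer R (k + 1)).eval x
      = (k + 1) * (descPochhammer R k).eval x := by
  rw [descPochhammer_succ_eval k x, descPochhammer_succ_left]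
  simp only [eval_mul, eval_X, eval_comp, eval_sub, eval_one, add_sub_cancel_right]
  ring

theorem mul_sum_Ico_descPochhammer_eval (k : ℕ) {s t : ℤ} (hst : s ≤ t) :
    (k + 1 : ℤ) * ∑ x ∈ Ico s t, (descPochhammer ℤ k).eval x
      = (descPochhammer ℤ (k + 1)).eval t - (descPochhammer ℤ (k + 1)).eval s := by
  induction t, hst using Int.leInduction with
  | base => simp
  | succ t hst ih =>
    rw [← insert_Ico_right_eq_Ico_add_one hst, sum_insert right_notMem_Ico, mul_add, ih,
      ← descPochhammer_eval_add_one_sub]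
    ring

theorem factorial_mul_sum_det_vandermonde_Ico {N : ℕ} (v : Fin (N + 1) → ℤ) (hv : Monotone v) :
    (N ! : ℤ) * ∑ w ∈ Fintype.piFinset (fun a : Fin N => Ico (v a.castSucc) (v a.succ)),
      (vandermonde w).det = (vandermonde v).det := by
  have hdet : ∀ {n} (w : Fin n → ℤ),
      (vandermonde w).det = (of fun a k : Fin n => (descPochhammer ℤ k).eval (w a)).det :=
    fun w => det_eval_matrixOfPolynomials_eq_det_vandermonde w _
      (fun k => descPochhammer_natDegree ℤ k) (fun k => monic_descPochhammer ℤ k)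
  -- Subtract from each row but the first the row above it; by the hockey-stick identity the
  -- differences become sums over the intervals `Ico (v a) (v (a + 1))`.
  let B : Matrix (Fin (N + 1)) (Fin (N + 1)) ℤ := Fin.cons
    (fun k => (descPochhammer ℤ k).eval (v 0))
    (fun a k => (descPochhammer ℤ k).eval (v a.succ) - (descPochhammer ℤ k).eval (v a.castSucc))
  let M : Matrix (Fin N) (Fin N) ℤ :=
    of fun a k => ∑ x ∈ Ico (v a.castSucc) (v a.succ), (descPochhammer ℤ k).eval x
  have hB : (vandermonde v).det = B.det := by
    rw [hdet]
    refine det_eq_of_forall_row_eq_smul_add_pred (fun _ => 1) (fun k => rfl) (fun a k => ?_)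
    simp [B]
  have hminor : B.submatrix Fin.succ Fin.succ = of fun a (k : Fin N) => ((k : ℤ) + 1) * M a k := by
    ext a k
    simp only [submatrix_apply, of_apply, M,
      mul_sum_Ico_descPochhammer_eval _ (hv a.castSucc_le_succ)]
    simp [B]
  have hM : M.det = ∑ w ∈ Fintype.piFinset (fun a : Fin N => Ico (v a.castSucc) (v a.succ)),
      (vandermonde w).det := by
    have := (detRowAlternating (R := ℤ) (n := Fin N)).map_sum_finset
      (fun _ x k => (descPochhammer ℤ k).eval x) (fun a => Ico (v a.castSucc) (v a.succ))
    simp only [Finset.sum_fn] at this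
    exact this.trans (sum_congr rfl fun w _ => (hdet w).symm)
  rw [hB, det_succ_column_zero, Fin.sum_univ_succ, Fin.succAbove_zero, hminor]
  simp only [Fin.val_zero, pow_zero, one_mul, B, Fin.cons_zero, Fin.cons_succ,
    descPochhammer_zero, eval_one, sub_self, mul_zero, zero_mul, sum_const_zero, add_zero]
  rw [det_mul_row, hM, Fin.prod_univ_eq_prod_range (fun k => (k : ℤ) + 1),
    ← prod_range_add_one_eq_factorial]
  push_cast
  rfl

structure IsSSYT (N : ℕ) (lam : ℕ → ℕ) (T : ℕ → ℕ → ℕ) : Prop where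
  bounds : ∀ i j, j < lam i → 1 ≤ T i j ∧ T i j ≤ N
  row_le : ∀ i j, j + 1 < lam i → T i j ≤ T i (j + 1)
  col_lt : ∀ i j, j < lam (i + 1) → T i j < T (i + 1) j
  eq_zero : ∀ i j, lam i ≤ j → T i j = 0

theorem schurOnes_eq_ncard (N : ℕ) (lam : ℕ → ℕ) :
    schurOnes N lam = {T | IsSSYT N lam T}.ncard := by
  rw [schurOnes]
  congr 1
  ext T
  exact ⟨fun ⟨h₁, h₂, h₃, h₄⟩ => ⟨h₁, h₂, h₃, h₄⟩, fun h => ⟨h.1, h.2, h.3, h.4⟩⟩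

namespace IsSSYT

variable {N : ℕ} {lam : ℕ → ℕ} {T : ℕ → ℕ → ℕ}

theorem entry_le (hT : IsSSYT N lam T) (a j : ℕ) : T a j ≤ N := by
  by_cases h : j < lam a
  · exact (hT.bounds a j h).2
  · simp [hT.eq_zero a j (not_lt.mp h)]

theorem row_mono (hT : IsSSYT N lam T) {a j k : ℕ} (hjk : j ≤ k) (hk : k < lam a) :
    T a j ≤ T a k := by
  induction k, hjk using Nat.le_induction with
  | base => rfl
  | succ k hjk ih => exact (ih (by omega)).trans (hT.row_le a k hk)

theorem lt_entry_of_antitone (hT : IsSSYT N lam T) (hlam : Antitone lam) {a j : ℕ}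
    (hj : j < lam a) : a < T a j := by
  induction a generalizing j with
  | zero => exact (hT.bounds 0 j hj).1
  | succ a ih => exact Nat.lt_of_le_of_lt (ih (hj.trans_le (hlam a.le_succ))) (hT.col_lt a j hj)

end IsSSYT

theorem finite_setOf_isSSYT {N R : ℕ} {lam : ℕ → ℕ} (hlam : Antitone lam)
    (hR : ∀ a, R ≤ a → lam a = 0) : {T | IsSSYT N lam T}.Finite := by
  refine (Set.finite_range fun (f : Fin R → Fin (lam 0) → Fin (N + 1)) a j =>
    if h : a < R ∧ j < lam 0 then (f ⟨a, h.1⟩ ⟨j, h.2⟩ : ℕ) else 0).subset fun T hT => ?_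
  refine ⟨fun a j => ⟨T a j, Nat.lt_succ_of_le (hT.entry_le a j)⟩, funext₂ fun a j => ?_⟩
  dsimp only
  split_ifs with h
  · rfl
  · refine (hT.eq_zero a j ?_).symm
    by_cases ha : R ≤ a
    · simp [hR a ha]
    · exact (hlam (Nat.zero_le a)).trans (by omega)

theorem lt_card_filter_range_iff {M j : ℕ} {P : ℕ → Prop} [DecidablePred P]
    (hP : ∀ j k, j ≤ k → k < M → P k → P j) (hj : j < M) :
    j < #{k ∈ range M | P k} ↔ P j := by
  constructor
  · intro hlt
    by_contra hPj
    have hsub : {k ∈ range M | P k} ⊆ range j := fun k hk => by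
      rw [mem_filter, mem_range] at hk
      exact mem_range.mpr (not_le.mp fun hjk => hPj (hP j k hjk hk.1 hk.2))
    exact absurd ((card_le_card hsub).trans_eq (card_range j)) (not_le.mpr hlt)
  · intro hPj
    have hsub : range (j + 1) ⊆ {k ∈ range M | P k} := fun k hk => by
      rw [mem_range] at hk
      exact mem_filter.mpr ⟨mem_range.mpr (by omega), hP k j (by omega) hj hPj⟩
    simpa using card_le_card hsub

def Interlaces (nu lam : ℕ → ℕ) : Prop := ∀ a, lam (a + 1) ≤ nu a ∧ nu a ≤ lam a

theorem Interlaces.antitone {nu lam : ℕ → ℕ} (h : Interlaces nu lam) : Antitone nu :=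
  antitone_nat_of_succ_le fun a => (h (a + 1)).2.trans (h a).1

def lowerShape (N : ℕ) (lam : ℕ → ℕ) (T : ℕ → ℕ → ℕ) (a : ℕ) : ℕ :=
  #{j ∈ range (lam a) | T a j ≤ N}

def truncateTableau (nu : ℕ → ℕ) (T : ℕ → ℕ → ℕ) (a j : ℕ) : ℕ := if j < nu a then T a j else 0

def extendTableau (N : ℕ) (lam nu : ℕ → ℕ) (T : ℕ → ℕ → ℕ) (a j : ℕ) : ℕ :=
  if j < nu a then T a j else if j < lam a then N + 1 else 0

namespace IsSSYT

variable {N : ℕ} {lam nu : ℕ → ℕ} {T : ℕ → ℕ → ℕ}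

theorem le_iff_lt_lowerShape (hT : IsSSYT (N + 1) lam T) {a j : ℕ} (hj : j < lam a) :
    T a j ≤ N ↔ j < lowerShape N lam T a :=
  (lt_card_filter_range_iff (fun _ _ hjk hk hTk => (hT.row_mono hjk hk).trans hTk) hj).symm

theorem interlaces_lowerShape (hT : IsSSYT (N + 1) lam T) (hlam : Antitone lam) :
    Interlaces (lowerShape N lam T) lam := by
  refine fun a => ⟨?_, (card_filter_le _ _).trans_eq (card_range _)⟩
  have hsub : range (lam (a + 1)) ⊆ {j ∈ range (lam a) | T a j ≤ N} := fun j hj => by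
    rw [mem_range] at hj
    have := hT.col_lt a j hj
    have := (hT.bounds (a + 1) j hj).2
    exact mem_filter.mpr ⟨mem_range.mpr (hj.trans_le (hlam a.le_succ)), by omega⟩
  simpa [lowerShape] using card_le_card hsub

theorem lowerShape_eq_zero (hT : IsSSYT (N + 1) lam T) (hlam : Antitone lam) {a : ℕ}
    (ha : N ≤ a) : lowerShape N lam T a = 0 := by
  refine card_eq_zero.mpr (filter_eq_empty_iff.mpr fun j hj hTj => ?_)
  have := hT.lt_entry_of_antitone hlam (mem_range.mp hj)
  omega

theorem truncateTableau_isSSYT (hT : IsSSYT (N + 1) lam T) (hlam : Antitone lam) :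
    IsSSYT N (lowerShape N lam T) (truncateTableau (lowerShape N lam T) T) := by
  have hnu := hT.interlaces_lowerShape hlam
  have hlt : ∀ {a j}, j < lowerShape N lam T a → j < lam a := fun h => h.trans_le (hnu _).2
  refine ⟨fun a j hj => ?_, fun a j hj => ?_, fun a j hj => ?_, fun a j hj => ?_⟩ <;>
    simp only [truncateTableau]
  · rw [if_pos hj]
    exact ⟨(hT.bounds a j (hlt hj)).1, (hT.le_iff_lt_lowerShape (hlt hj)).mpr hj⟩
  · rw [if_pos (by omega), if_pos hj]
    exact hT.row_le a j (hlt hj)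
  · rw [if_pos hj, if_pos (hj.trans_le (hnu.antitone a.le_succ))]
    exact hT.col_lt a j (hlt hj)
  · rw [if_neg (not_lt.mpr hj)]

theorem extendTableau_truncateTableau (hT : IsSSYT (N + 1) lam T) :
    extendTableau N lam (lowerShape N lam T) (truncateTableau (lowerShape N lam T) T) = T := by
  funext a j
  simp only [extendTableau, truncateTableau]
  split_ifs with hnu hlam
  · rfl
  · have := (hT.le_iff_lt_lowerShape hlam).not.mpr hnu
    have := (hT.bounds a j hlam).2
    omega
  · exact (hT.eq_zero a j (not_lt.mp hlam)).symm

theorem truncateTableau_extendTableau (hT : IsSSYT N nu T) :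
    truncateTableau nu (extendTableau N lam nu T) = T := by
  funext a j
  simp only [truncateTableau, extendTableau]
  split_ifs with h
  · rfl
  · exact (hT.eq_zero a j (not_lt.mp h)).symm

theorem extendTableau_isSSYT (hT : IsSSYT N nu T) (hnu : Interlaces nu lam) :
    IsSSYT (N + 1) lam (extendTableau N lam nu T) := by
  refine ⟨fun a j hj => ?_, fun a j hj => ?_, fun a j hj => ?_, fun a j hj => ?_⟩ <;>
    simp only [extendTableau]
  · split_ifs with h
    · have := hT.bounds a j h; omega
    · omega
  · have := hT.entry_le a j
    split_ifs <;> first | omega | exact hT.row_le a j ‹_›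
  · have hj' : j < nu a := hj.trans_le (hnu a).1
    have := hT.entry_le a j
    split_ifs <;> first | omega | exact hT.col_lt a j ‹_›
  · rw [if_neg (by have := (hnu a).2; omega), if_neg (by omega)]

theorem lowerShape_extendTableau (hT : IsSSYT N nu T) (hnu : Interlaces nu lam) :
    lowerShape N lam (extendTableau N lam nu T) = nu := by
  funext a
  have hfilter : {j ∈ range (lam a) | extendTableau N lam nu T a j ≤ N} = range (nu a) := by
    ext j
    have := (hnu a).2
    have := hT.entry_le a j
    rw [mem_filter, mem_range, mem_range, extendTableau]
    split_ifs <;> omega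
  rw [lowerShape, hfilter, card_range]

end IsSSYT

theorem image_extendTableau {N : ℕ} {lam nu : ℕ → ℕ} (hlam : Antitone lam)
    (hnu : Interlaces nu lam) :
    extendTableau N lam nu '' {T | IsSSYT N nu T} =
      {T | IsSSYT (N + 1) lam T ∧ lowerShape N lam T = nu} := by
  ext T
  constructor
  · rintro ⟨T, hT, rfl⟩
    exact ⟨hT.extendTableau_isSSYT hnu, hT.lowerShape_extendTableau hnu⟩
  · rintro ⟨hT, rfl⟩
    exact ⟨_, hT.truncateTableau_isSSYT hlam, hT.extendTableau_truncateTableau⟩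

def extendByZero {N : ℕ} (g : Fin N → ℕ) (a : ℕ) : ℕ := if h : a < N then g ⟨a, h⟩ else 0

theorem extendByZero_apply {N : ℕ} (g : Fin N → ℕ) (a : Fin N) : extendByZero g a = g a :=
  dif_pos a.isLt

theorem restrict_eq_iff_eq_extendByZero {N : ℕ} {f : ℕ → ℕ} (hf : ∀ a, N ≤ a → f a = 0)
    {g : Fin N → ℕ} : (fun a : Fin N => f a) = g ↔ f = extendByZero g := by
  constructor
  · rintro rfl
    funext a
    by_cases ha : a < N
    · exact (extendByZero_apply (fun a : Fin N => f a) ⟨a, ha⟩).symm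
    · rw [hf a (not_lt.mp ha), extendByZero, dif_neg ha]
  · rintro rfl
    exact funext (extendByZero_apply g)

theorem interlaces_extendByZero {N : ℕ} {lam : ℕ → ℕ} (hvan : ∀ a, N + 1 ≤ a → lam a = 0)
    {g : Fin N → ℕ} (hg : g ∈ Fintype.piFinset fun a : Fin N => Icc (lam (a + 1)) (lam a)) :
    Interlaces (extendByZero g) lam := by
  intro a
  by_cases ha : a < N
  · simpa [extendByZero, ha] using Fintype.mem_piFinset.mp hg ⟨a, ha⟩
  · simp [extendByZero, ha, hvan (a + 1) (by omega)]

theorem schurOnes_succ_eq_sum {N : ℕ} {lam : ℕ → ℕ} (hlam : Antitone lam)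
    (hvan : ∀ a, N + 1 ≤ a → lam a = 0) :
    schurOnes (N + 1) lam = ∑ g ∈ Fintype.piFinset (fun a : Fin N => Icc (lam (a + 1)) (lam a)),
      schurOnes N (extendByZero g) := by
  classical
  have hfin := finite_setOf_isSSYT (N := N + 1) hlam hvan
  have hmaps : ∀ T ∈ hfin.toFinset, (fun a : Fin N => lowerShape N lam T a) ∈
      Fintype.piFinset fun a : Fin N => Icc (lam (a + 1)) (lam a) := fun T hT =>
    Fintype.mem_piFinset.mpr fun a =>
      mem_Icc.mpr ((hfin.mem_toFinset.mp hT).interlaces_lowerShape hlam a)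
  rw [schurOnes_eq_ncard, Set.ncard_eq_toFinset_card _ hfin, card_eq_sum_card_fiberwise hmaps]
  refine sum_congr rfl fun g hg => ?_
  have hnu := interlaces_extendByZero hvan hg
  have hfiber : (({T ∈ hfin.toFinset | (fun a : Fin N => lowerShape N lam T a) = g} : Finset _) :
      Set (ℕ → ℕ → ℕ)) = {T | IsSSYT (N + 1) lam T ∧ lowerShape N lam T = extendByZero g} := by
    ext T
    simp only [coe_filter, Set.Finite.mem_toFinset, Set.mem_ofPred_eq]
    exact and_congr_right fun hT =>
      restrict_eq_iff_eq_extendByZero fun a => hT.lowerShape_eq_zero hlam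
  rw [schurOnes_eq_ncard, ← Set.ncard_coe_finset, hfiber,
    ← image_extendTableau hlam (interlaces_extendByZero hvan hg)]
  exact (Set.LeftInvOn.injOn fun T hT => IsSSYT.truncateTableau_extendTableau hT).ncard_image

theorem schurOnes_eq_one_of_forall_eq_zero {N : ℕ} {lam : ℕ → ℕ} (h : ∀ a, lam a = 0) :
    schurOnes N lam = 1 := by
  rw [schurOnes_eq_ncard, Set.ncard_eq_one]
  refine ⟨fun _ _ => 0, Set.eq_singleton_iff_unique_mem.mpr ⟨?_, fun T hT => ?_⟩⟩
  · constructor <;> simp [h]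
  · exact funext₂ fun a j => hT.eq_zero a j (by simp [h])

theorem sum_piFinset_Icc_eq_sum_piFinset_Ico {M : Type*} [AddCommMonoid M] {N : ℕ}
    (lam : ℕ → ℕ) (f : (Fin N → ℤ) → M) :
    ∑ g ∈ Fintype.piFinset (fun a : Fin N => Icc (lam (a + 1)) (lam a)), f (fun a => a - g a)
      = ∑ w ∈ Fintype.piFinset (fun a : Fin N => Ico ((a : ℤ) - lam a) (a + 1 - lam (a + 1))),
          f w := by
  refine sum_nbij' (fun g a => a - g a) (fun w a => (a - w a).toNat) ?_ ?_ ?_ ?_ fun _ _ => rfl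
  all_goals intro x hx
  all_goals simp only [Fintype.mem_piFinset, mem_Icc, mem_Ico] at hx ⊢
  · intro a
    have := hx a
    omega
  · intro a
    have := hx a
    omega
  · funext a
    simp
  · funext a
    have := hx a
    omega

theorem prod_factorial_mul_schurOnes {N : ℕ} {lam : ℕ → ℕ} (hlam : Antitone lam)
    (hvan : ∀ a, N ≤ a → lam a = 0) :
    (∏ b ∈ range N, (b ! : ℤ)) * schurOnes N lam
      = (vandermonde fun a : Fin N => (a : ℤ) - lam a).det := by
  induction N generalizing lam with
  | zero => simp [schurOnes_eq_one_of_forall_eq_zero fun a => hvan a a.zero_le]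
  | succ N ih =>
    have hv : Monotone fun a : Fin (N + 1) => (a : ℤ) - lam a := fun a b hab => by
      have := hlam (Fin.le_iff_val_le_val.mp hab)
      have : (a : ℕ) ≤ b := hab
      dsimp only
      omega
    calc (∏ b ∈ range (N + 1), (b ! : ℤ)) * schurOnes (N + 1) lam
        = N ! * ∑ g ∈ Fintype.piFinset (fun a : Fin N => Icc (lam (a + 1)) (lam a)),
            (∏ b ∈ range N, (b ! : ℤ)) * schurOnes N (extendByZero g) := by
          rw [schurOnes_succ_eq_sum hlam hvan, prod_range_succ, Nat.cast_sum, mul_sum, mul_sum]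
          exact sum_congr rfl fun _ _ => by ring
      _ = N ! * ∑ g ∈ Fintype.piFinset (fun a : Fin N => Icc (lam (a + 1)) (lam a)),
            (vandermonde fun a : Fin N => (a : ℤ) - g a).det := by
          refine congrArg _ (sum_congr rfl fun g hg => ?_)
          rw [ih (interlaces_extendByZero hvan hg).antitone fun a ha => dif_neg (not_lt.mpr ha)]
          simp only [extendByZero_apply]
      _ = (vandermonde fun a : Fin (N + 1) => (a : ℤ) - lam a).det := by
          rw [sum_piFinset_Icc_eq_sum_piFinset_Ico (f := fun w => (vandermonde w).det),
            ← factorial_mul_sum_det_vandermonde_Ico _ hv]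
          simp

def ltPairs (N : ℕ) : Finset (ℕ × ℕ) := {p ∈ range N ×ˢ range N | p.1 < p.2}

theorem mem_ltPairs {N : ℕ} {p : ℕ × ℕ} : p ∈ ltPairs N ↔ p.1 < p.2 ∧ p.2 < N := by
  simp only [ltPairs, mem_filter, mem_product, mem_range]
  omega

theorem det_vandermonde_eq_prod_ltPairs (N : ℕ) (v : ℕ → ℤ) :
    (vandermonde fun a : Fin N => v a).det = ∏ p ∈ ltPairs N, (v p.2 - v p.1) := by
  rw [det_vandermonde,
    prod_finset_product' (f := fun a b => v b - v a) _ (range N) (fun a => Ioo a N)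
    (fun p => by simp only [mem_ltPairs, mem_range, mem_Ioo]; omega),
    ← Fin.prod_univ_eq_prod_range (fun a => ∏ b ∈ Ioo a N, (v b - v a))]
  refine prod_congr rfl fun a _ => ?_
  rw [← Fin.map_valEmbedding_Ioi, prod_map]
  rfl

theorem prod_le_prod_of_eq_off_pair {ι R : Type*} [CommSemiring R] [PartialOrder R]
    [IsOrderedRing R] [DecidableEq ι] {s : Finset ι} {p q : ι} {f g : ι → R}
    (hp : p ∈ s) (hq : q ∈ s) (hpq : p ≠ q) (hg : ∀ x ∈ s, 0 ≤ g x)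
    (hfg : ∀ x ∈ s, x ≠ p → x ≠ q → f x = g x) (h : f p * f q ≤ g p * g q) :
    ∏ x ∈ s, f x ≤ ∏ x ∈ s, g x := by
  have hq' : q ∈ s.erase p := mem_erase.mpr ⟨hpq.symm, hq⟩
  rw [← mul_prod_erase s f hp, ← mul_prod_erase s g hp, ← mul_prod_erase _ f hq',
    ← mul_prod_erase _ g hq', ← mul_assoc, ← mul_assoc,
    prod_congr rfl fun x hx => hfg x (mem_of_mem_erase (mem_of_mem_erase hx))
      (ne_of_mem_erase (mem_of_mem_erase hx)) (ne_of_mem_erase hx)]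
  exact mul_le_mul_of_nonneg_right h
    (prod_nonneg fun x hx => hg x (mem_of_mem_erase (mem_of_mem_erase hx)))

theorem sq_sub_one_mul_sq_le_sq_mul_sq_sub_one {R : Type*} [CommRing R] [LinearOrder R]
    [IsStrictOrderedRing R] {x y : R} (hx : 0 ≤ x) (hxy : x ≤ y) :
    (x ^ 2 - 1) * y ^ 2 ≤ x ^ 2 * (y ^ 2 - 1) := by
  linear_combination pow_le_pow_left₀ hx hxy 2

theorem prod_ltPairs_sub_mul_le {N i hi r : ℕ} {x x' y y' : ℕ → ℤ}
    (hx : StrictMono x) (hy' : Monotone y') (hr : r < i) (hihi : i < hi) (hhiN : hi < N)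
    (hxx' : ∀ a, a ≠ i → a ≠ hi → x' a = x a) (hyy' : ∀ a, a ≠ i → a ≠ hi → y' a = y a)
    (hxy : ∀ a, a ≠ r → y a = x a) (hx'y' : ∀ a, a ≠ r → y' a = x' a)
    (hx'i : x' i = x i + 1) (hx'hi : x' hi = x hi - 1) (hyr : y r = x r + 1)
    (hy'r : y' r = x' r + 1) :
    ∏ p ∈ ltPairs N, (x' p.2 - x' p.1) * (y p.2 - y p.1) ≤
      ∏ p ∈ ltPairs N, (x p.2 - x p.1) * (y' p.2 - y' p.1) := by
  refine prod_le_prod_of_eq_off_pair (p := (r, i)) (q := (r, hi))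
    (mem_ltPairs.mpr ⟨hr, by omega⟩) (mem_ltPairs.mpr ⟨by omega, hhiN⟩) (by simp; omega)
    (fun p hp => mul_nonneg (sub_nonneg.mpr (hx.monotone (mem_ltPairs.mp hp).1.le))
      (sub_nonneg.mpr (hy' (mem_ltPairs.mp hp).1.le))) (fun ⟨a, b⟩ hp hpi hphi => ?_) ?_
  · obtain ⟨hab, -⟩ := mem_ltPairs.mp hp
    simp only [ne_eq, Prod.mk.injEq, not_and] at hpi hphi ⊢
    by_cases hra : a = r ∨ b = r
    · have : a ≠ i ∧ a ≠ hi ∧ b ≠ i ∧ b ≠ hi := by omega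
      rw [hxx' a this.1 this.2.1, hxx' b this.2.2.1 this.2.2.2, hyy' a this.1 this.2.1,
        hyy' b this.2.2.1 this.2.2.2]
    · push Not at hra
      rw [hxy a hra.1, hxy b hra.2, hx'y' a hra.1, hx'y' b hra.2]
      ring
  · have hri := hx hr
    have hihi' := hx hihi
    simp only
    rw [hy'r, hxx' r (by omega) (by omega), hxy i (by omega), hxy hi (by omega), hyr,
      hx'y' i (by omega), hx'y' hi (by omega), hx'i, hx'hi]
    linear_combination sq_sub_one_mul_sq_le_sq_mul_sq_sub_one (x := x i - x r)
      (y := x hi - x r - 1) (by omega) (by omega)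

theorem strictMono_sub_of_antitone {lam : ℕ → ℕ} (hlam : Antitone lam) :
    StrictMono fun a : ℕ => (a : ℤ) - lam a := fun a b hab => by
  have := hlam hab.le
  dsimp only
  omega

theorem det_vandermonde_mul_le_of_moveBox {N i hi r : ℕ} {lam hatlam mu hatmu : ℕ → ℕ}
    (hlam : Antitone lam) (hhatmu : Antitone hatmu)
    (hmove : moveBox lam hatlam i hi) (hmovemu : moveBox mu hatmu i hi)
    (hihi : i < hi) (hhiN : hi < N)
    (hadd : lam = Function.update mu r (mu r + 1))
    (haddhat : hatlam = Function.update hatmu r (hatmu r + 1)) (hr : r < i) :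
    (vandermonde fun a : Fin N => (a : ℤ) - hatlam a).det *
        (vandermonde fun a : Fin N => (a : ℤ) - mu a).det ≤
      (vandermonde fun a : Fin N => (a : ℤ) - lam a).det *
        (vandermonde fun a : Fin N => (a : ℤ) - hatmu a).det := by
  rw [det_vandermonde_eq_prod_ltPairs N fun a => a - hatlam a,
    det_vandermonde_eq_prod_ltPairs N fun a => a - mu a,
    det_vandermonde_eq_prod_ltPairs N fun a => a - lam a,
    det_vandermonde_eq_prod_ltPairs N fun a => a - hatmu a, ← prod_mul_distrib,
    ← prod_mul_distrib]
  refine prod_ltPairs_sub_mul_le (x := fun a => (a : ℤ) - lam a)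
    (x' := fun a => (a : ℤ) - hatlam a) (y := fun a => (a : ℤ) - mu a)
    (y' := fun a => (a : ℤ) - hatmu a) (strictMono_sub_of_antitone hlam)
    (strictMono_sub_of_antitone hhatmu).monotone hr hihi hhiN ?_ ?_ ?_ ?_ ?_ ?_ ?_ ?_
  · intro a ha ha'
    simp [hmove.2.2 a ha ha']
  · intro a ha ha'
    simp [hmovemu.2.2 a ha ha']
  · intro a ha
    simp [hadd, Function.update_of_ne ha]
  · intro a ha
    simp [haddhat, Function.update_of_ne ha]
  · simp only [hmove.1]; push_cast; ring
  · simp only [hmove.2.1]; push_cast; ring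
  · simp only [hadd, Function.update_self]; push_cast; ring
  · simp only [haddhat, Function.update_self]; push_cast; ring

theorem schur_ones_monotonicity_r_lt_i_general (N i hi r : ℕ)
    (lam hatlam mu hatmu : ℕ → ℕ)
    (hlam : isPartition lam) (hhatlam : isPartition hatlam)
    (hmu : isPartition mu) (hhatmu : isPartition hatmu)
    (hmove : moveBox lam hatlam i hi) (hmovemu : moveBox mu hatmu i hi)
    (hihi : i < hi)
    (hadd : lam = Function.update mu r (mu r + 1))
    (haddhat : hatlam = Function.update hatmu r (hatmu r + 1))
    (hr : r < i)
    (hN : ∀ a, N ≤ a → hatlam a = 0) :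
    schurOnes N hatlam * schurOnes N mu ≤ schurOnes N lam * schurOnes N hatmu := by
  have hhiN : hi < N := by
    by_contra h
    have := hN hi (not_lt.mp h)
    have := hmove.2.1
    omega
  have hlamN : ∀ a, N ≤ a → lam a = 0 := fun a ha =>
    (hmove.2.2 a (by omega) (by omega)).trans (hN a ha)
  have hmuN : ∀ a, N ≤ a → mu a = 0 := fun a ha => by
    rw [← hlamN a ha, hadd, Function.update_of_ne (by omega)]
  have hhatmuN : ∀ a, N ≤ a → hatmu a = 0 := fun a ha => by
    rw [← hN a ha, haddhat, Function.update_of_ne (by omega)]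
  have key := det_vandermonde_mul_le_of_moveBox (N := N) hlam.1 hhatmu.1 hmove hmovemu hihi hhiN
    hadd haddhat hr
  rw [← prod_factorial_mul_schurOnes hhatlam.1 hN, ← prod_factorial_mul_schurOnes hmu.1 hmuN,
    ← prod_factorial_mul_schurOnes hlam.1 hlamN,
    ← prod_factorial_mul_schurOnes hhatmu.1 hhatmuN] at key
  have : ((∏ b ∈ range N, (b ! : ℤ)) ^ 2) * (schurOnes N hatlam * schurOnes N mu : ℕ) ≤
      ((∏ b ∈ range N, (b ! : ℤ)) ^ 2) * (schurOnes N lam * schurOnes N hatmu : ℕ) := by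
    push_cast
    linear_combination key
  exact_mod_cast le_of_mul_le_mul_left this (by positivity)

theorem schur_ones_monotonicity_r_lt_i (n N i hi r : ℕ)
    (lam hatlam mu hatmu : ℕ → ℕ)
    (hlam : isPartition lam) (hhatlam : isPartition hatlam)
    (hmu : isPartition mu) (hhatmu : isPartition hatmu)
    (hslam : psize lam = n) (hshatlam : psize hatlam = n)
    (hsmu : psize mu = n - 1) (hshatmu : psize hatmu = n - 1)
    (hmove : moveBox lam hatlam i hi) (hmovemu : moveBox mu hatmu i hi)
    (hihi : i < hi)
    (hadd : lam = Function.update mu r (mu r + 1))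
    (haddhat : hatlam = Function.update hatmu r (hatmu r + 1))
    (hr : r < i)
    (hN : ∀ a, N ≤ a → hatlam a = 0) :
    schurOnes N hatlam * schurOnes N mu ≤ schurOnes N lam * schurOnes N hatmu :=
  schur_ones_monotonicity_r_lt_i_general N i hi r lam hatlam mu hatmu hlam hhatlam hmu hhatmu hmove
    hmovemu hihi hadd haddhat hr hN
end

section
/- Let λ, λ̂ be partitions of n and μ, μ̂ partitions of n−1 such that λ̂ is obtained from λ by moving a box from row i to row î with î > i, μ̂ from μ by the same move, and λ∖μ = λ̂∖μ̂ = (r,c). If r < i, then dim(μ̂)/dim(λ̂) ≥ dim(μ)/dim(λ); if r > î, then dim(μ̂)/dim(λ̂) ≤ dim(μ)/dim(λ). -/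
open scoped BigOperators

/-!
With `βₛ = λₛ + (m - 1 - s)` for a bound `m` on the number of rows, Frobenius' formula
`dim λ · ∏ₛ βₛ! = |λ|! · ∏_{s<t} (βₛ - βₜ)` follows by induction on `|λ|` from the branching rule
`dim λ = ∑ dim (λ - corner)`; the inductive step is the identity
`∑ᵣ βᵣ ∏_{t ≠ r} φ(βᵣ - βₜ) = ∑ β - (m choose 2)`, `φ d = (d - 1)/d`, a case of Lagrange
interpolation. Removing the corner in row `r` lowers `βᵣ` by one, so the formula gives
`dim μ / dim λ = βᵣ / |λ| · ∏_{s ≠ r} φ(βᵣ - βₛ)`.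
Moving a box from row `i` to row `î` lowers `βᵢ`, raises `β_î` and fixes `βᵣ`, so only the
factors at `i` and `î` change, and all factors are nonnegative. The two that change move in the
claimed direction since `φ(a)φ(c) ≤ φ(a+1)φ(c-1)` when `1 ≤ a ≤ c - 1`, and the reverse holds
when `a ≤ c - 1 ≤ -2`.
-/

open Finset Polynomial

theorem Finset.sum_powersetCard_succ_sum {ι M : Type*} [DecidableEq ι] [AddCommMonoid M]
    (s : Finset ι) (k : ℕ) (f : ι → M) :
    ∑ t ∈ s.powersetCard (k + 1), ∑ i ∈ t, f i = (#s - 1).choose k • ∑ i ∈ s, f i := by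
  have hcount : ∀ i ∈ s, #((s.powersetCard (k + 1)).filter (i ∈ ·)) = (#s - 1).choose k := by
    intro i hi
    simpa using card_filter_powersetCard_subset {i} s (k + 1) (by simpa) (by simp)
  calc ∑ t ∈ s.powersetCard (k + 1), ∑ i ∈ t, f i
      = ∑ t ∈ s.powersetCard (k + 1), ∑ i ∈ s, if i ∈ t then f i else 0 := by
        refine sum_congr rfl fun t ht => ?_
        rw [sum_ite_mem, inter_eq_right.mpr (mem_powersetCard.mp ht).1]
    _ = ∑ i ∈ s, #((s.powersetCard (k + 1)).filter (i ∈ ·)) • f i := by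
        rw [sum_comm]
        exact sum_congr rfl fun i _ => by rw [← sum_filter, sum_const]
    _ = _ := by
        rw [smul_sum]
        exact sum_congr rfl fun i hi => by rw [hcount i hi]

theorem Lagrange.coeff_nodal {ι K : Type*} [Field K] (s : Finset ι) (x : ι → K) {k : ℕ}
    (hk : k ≤ #s) :
    (Lagrange.nodal s x).coeff k = ∑ t ∈ s.powersetCard (#s - k), ∏ i ∈ t, -x i := by
  simp_rw [Lagrange.nodal_eq, sub_eq_add_neg, ← map_neg C]
  exact prod_X_add_C_coeff s _ hk

section KeyIdentity

variable {ι K : Type*} [DecidableEq ι] [Field K]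

def cornerFactor (d : K) : K := (d - 1) / d

def cornerRatio (s : Finset ι) (x : ι → K) (r : ι) : K :=
  ∏ t ∈ s.erase r, cornerFactor (x r - x t)

theorem coeff_nodal_add_one_sub_nodal (s : Finset ι) (x : ι → K) {m : ℕ} (hs : #s = m + 2) :
    (Lagrange.nodal s (x · + 1) - Lagrange.nodal s x).coeff (m + 1) = -(m + 2 : K) ∧
    (Lagrange.nodal s (x · + 1) - Lagrange.nodal s x).coeff m =
      (m + 1) * ∑ i ∈ s, x i + ((m + 2).choose 2 : ℕ) := by
  constructor
  · rw [coeff_sub, Lagrange.coeff_nodal _ _ (by omega), Lagrange.coeff_nodal _ _ (by omega),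
      hs, show m + 2 - (m + 1) = 1 by omega, powersetCard_one]
    simp [sum_add_distrib, hs]
  · have hpair : ∀ t ∈ s.powersetCard 2,
        ∏ i ∈ t, -(x i + 1) - ∏ i ∈ t, -x i = ∑ i ∈ t, x i + 1 := by
      intro t ht
      obtain ⟨a, b, hab, rfl⟩ := card_eq_two.mp (mem_powersetCard.mp ht).2
      rw [prod_pair hab, prod_pair hab, sum_pair hab]
      ring
    rw [coeff_sub, Lagrange.coeff_nodal _ _ (by omega), Lagrange.coeff_nodal _ _ (by omega),
      hs, show m + 2 - m = 2 by omega, ← sum_sub_distrib, sum_congr rfl hpair,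
      sum_add_distrib, sum_powersetCard_succ_sum, sum_const, card_powersetCard, hs]
    simp

theorem sum_mul_cornerRatio (s : Finset ι) (x : ι → K) (hx : Set.InjOn x s) :
    ∑ r ∈ s, x r * cornerRatio s x r = ∑ r ∈ s, x r - ((#s).choose 2 : ℕ) := by
  obtain hs | ⟨m, hs⟩ : #s ≤ 1 ∨ ∃ m, #s = m + 2 :=
    (le_or_gt #s 1).imp_right fun h => ⟨#s - 2, by omega⟩
  · rcases Nat.le_one_iff_eq_zero_or_eq_one.mp hs with h | h
    · simp [card_eq_zero.mp h]
    · obtain ⟨a, rfl⟩ := card_eq_one.mp h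
      simp [cornerRatio]
  obtain ⟨hP₁, hP₀⟩ := coeff_nodal_add_one_sub_nodal s x hs
  set g := Lagrange.nodal s x
  set P := Lagrange.nodal s (x · + 1) - g
  have hg₂ : g.coeff (m + 2) = 1 := by
    rw [← hs, ← Lagrange.natDegree_nodal (v := x)]
    exact Lagrange.nodal_monic.coeff_natDegree
  have hg₁ : g.coeff (m + 1) = -∑ i ∈ s, x i := by
    rw [show m + 1 = #s - 1 by omega]
    exact prod_X_sub_C_coeff_card_pred s x (by omega)
  have hg_deg : ∀ j, m + 2 < j → g.coeff j = 0 := fun j hj =>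
    coeff_eq_zero_of_natDegree_lt (by rwa [Lagrange.natDegree_nodal, hs])
  have hP_deg : P.degree < (m + 2 : ℕ) := by
    have := degree_sub_lt_left (p := Lagrange.nodal s (x · + 1)) (q := g)
      (by rw [Lagrange.degree_nodal, Lagrange.degree_nodal]) Lagrange.nodal_ne_zero
      (by rw [Lagrange.nodal_monic.leadingCoeff, Lagrange.nodal_monic.leadingCoeff])
    rwa [Lagrange.degree_nodal, hs] at this
  -- `-X * nodal (x + 1)` has the wanted values at the nodes; subtracting multiples of `nodal x`
  -- (which vanishes there) brings its degree below `#s`.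
  set Q := -(X * P) - C (#s : K) * g
  have hQ_eval : ∀ r ∈ s, Q.eval (x r) = x r * ∏ t ∈ s.erase r, (x r - x t - 1) := by
    intro r hr
    have hg1 : (Lagrange.nodal s (x · + 1)).eval (x r) = -∏ t ∈ s.erase r, (x r - x t - 1) := by
      rw [Lagrange.eval_nodal, ← mul_prod_erase s _ hr]
      simp only [sub_add_cancel_left, neg_one_mul, neg_inj]
      exact prod_congr rfl fun t _ => by ring
    simp [Q, P, hg1, Lagrange.eval_nodal_at_node hr, g]
  have hQ_coeff : Q.coeff (m + 1) = ∑ i ∈ s, x i - ((m + 2).choose 2 : ℕ) := by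
    simp only [Q, coeff_sub, coeff_neg, coeff_X_mul, coeff_C_mul, hP₀, hg₁, hs]
    push_cast
    ring
  have hQ_deg : Q.degree < #s := by
    rw [hs, degree_lt_iff_coeff_zero]
    intro k hk
    obtain ⟨j, rfl⟩ : ∃ j, k = j + 1 := ⟨k - 1, by omega⟩
    simp only [Q, coeff_sub, coeff_neg, coeff_X_mul, coeff_C_mul]
    rcases (show m + 1 = j ∨ m + 2 ≤ j by omega) with rfl | hj
    · rw [hP₁, hg₂, hs]; push_cast; ring
    · rw [coeff_eq_zero_of_degree_lt (hP_deg.trans_le (by exact_mod_cast hj)), hg_deg _ (by omega)]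
      ring
  rw [show m + 1 = #s - 1 by omega, Lagrange.coeff_eq_sum hx hQ_deg] at hQ_coeff
  rw [hs, ← hQ_coeff]
  refine sum_congr rfl fun r hr => ?_
  rw [hQ_eval r hr, cornerRatio, mul_div_assoc, ← prod_div_distrib]
  rfl

end KeyIdentity

section Vandermonde

variable {R : Type*} [CommRing R]

def vandermondeProd (m : ℕ) (x : ℕ → R) : R :=
  ∏ t ∈ range m, ∏ s ∈ range t, (x s - x t)

theorem vandermondeProd_congr {m : ℕ} {x y : ℕ → R} (h : ∀ s < m, x s = y s) :
    vandermondeProd m x = vandermondeProd m y :=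
  prod_congr rfl fun t ht => prod_congr rfl fun s hs => by
    rw [mem_range] at hs ht
    rw [h s (hs.trans ht), h t ht]

theorem vandermondeProd_succ (m : ℕ) (x : ℕ → R) :
    vandermondeProd (m + 1) x = vandermondeProd m x * ∏ s ∈ range m, (x s - x m) :=
  prod_range_succ _ _

theorem exists_vandermondeProd_update_eq (x : ℕ → R) {m r : ℕ} (hr : r < m) :
    ∃ c₀ : R, ∀ c, vandermondeProd m (Function.update x r c) =
      c₀ * ∏ s ∈ (range m).erase r, (c - x s) := by
  induction m with
  | zero => omega
  | succ m ih =>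
    rcases Nat.lt_succ_iff_lt_or_eq.mp hr with hr | rfl
    · obtain ⟨c₀, hc₀⟩ := ih hr
      refine ⟨c₀ * ∏ s ∈ (range m).erase r, (x s - x m), fun c => ?_⟩
      have hrm : r ∈ range m := mem_range.mpr hr
      have herase : (range (m + 1)).erase r = insert m ((range m).erase r) := by
        ext
        simp only [mem_erase, mem_range, mem_insert]
        omega
      have hrest : ∏ s ∈ (range m).erase r, (Function.update x r c s - x m) =
          ∏ s ∈ (range m).erase r, (x s - x m) :=
        prod_congr rfl fun s hs => by rw [Function.update_of_ne (ne_of_mem_erase hs)]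
      rw [vandermondeProd_succ, hc₀, herase, prod_insert (by simp), ← mul_prod_erase _ _ hrm,
        Function.update_of_ne (show m ≠ r by omega), hrest, Function.update_self]
      ring
    · refine ⟨(-1) ^ r * vandermondeProd r x, fun c => ?_⟩
      rw [vandermondeProd_succ, vandermondeProd_congr fun s hs => Function.update_of_ne hs.ne _ _,
        Finset.range_add_one, erase_insert (by simp), Function.update_self,
        prod_congr rfl fun s hs => by
          rw [Function.update_of_ne (mem_range.mp hs).ne, ← neg_sub, neg_eq_neg_one_mul],
        prod_mul_distrib, prod_const, card_range]
      ring

theorem vandermondeProd_update_mul (x : ℕ → R) {m r : ℕ} (hr : r < m) (c : R) :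
    vandermondeProd m (Function.update x r c) * ∏ s ∈ (range m).erase r, (x r - x s) =
      vandermondeProd m x * ∏ s ∈ (range m).erase r, (c - x s) := by
  obtain ⟨c₀, hc₀⟩ := exists_vandermondeProd_update_eq x hr
  have hx := hc₀ (x r)
  rw [Function.update_eq_self] at hx
  rw [hc₀, hx]
  ring

end Vandermonde

theorem vandermondeProd_update_sub_one {K : Type*} [Field K] {x : ℕ → K} {m r : ℕ}
    (hx : Set.InjOn x (range m)) (hr : r < m) :
    vandermondeProd m (Function.update x r (x r - 1)) =
      vandermondeProd m x * cornerRatio (range m) x r := by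
  have hne : ∏ s ∈ (range m).erase r, (x r - x s) ≠ 0 := by
    refine prod_ne_zero_iff.mpr fun s hs => sub_ne_zero.mpr fun h => ne_of_mem_erase hs ?_
    exact (hx (by simpa using hr) (by simpa using mem_of_mem_erase hs) h).symm
  rw [← mul_div_cancel_right₀ (vandermondeProd m _) hne, vandermondeProd_update_mul x hr,
    mul_div_assoc, cornerRatio, ← prod_div_distrib]
  congr 1
  exact prod_congr rfl fun s _ => by rw [cornerFactor, sub_right_comm]

theorem vandermondeProd_pos {K : Type*} [Field K] [LinearOrder K] [IsStrictOrderedRing K]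
    {x : ℕ → K} {m : ℕ} (hx : StrictAntiOn x (Set.Iio m)) : 0 < vandermondeProd m x :=
  prod_pos fun t ht => prod_pos fun s hs => by
    simp only [mem_range] at hs ht
    exact sub_pos.mpr (hx (by simpa using hs.trans ht) (by simpa using ht) hs)

section CornerFactor

variable {K : Type*} [Field K] [LinearOrder K] [IsStrictOrderedRing K]

-- At `k = 0` this is the convention `(-1) / 0 = 0`.
theorem cornerFactor_intCast_nonneg (k : ℤ) : 0 ≤ cornerFactor (k : K) := by
  rcases lt_trichotomy k 0 with hk | rfl | hk
  · have hk : (k : K) ≤ -1 := by exact_mod_cast Int.le_sub_one_of_lt hk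
    exact div_nonneg_of_nonpos (by linarith) (by linarith)
  · simp [cornerFactor]
  · have hk : (1 : K) ≤ k := by exact_mod_cast hk
    exact div_nonneg (by linarith) (by linarith)

-- Both inequalities come down to `a ^ 2 ≤ (c - 1) ^ 2` after clearing denominators.
theorem cornerFactor_mul_le_of_one_le {a c : K} (ha : 1 ≤ a) (hac : a + 1 ≤ c) :
    cornerFactor a * cornerFactor c ≤ cornerFactor (a + 1) * cornerFactor (c - 1) := by
  simp only [cornerFactor, div_mul_div_comm]
  rw [div_le_div_iff₀ (by nlinarith) (by nlinarith)]
  nlinarith [mul_nonneg (sub_nonneg.mpr hac) (by linarith : (0 : K) ≤ c - 1 + a)]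

theorem cornerFactor_mul_le_of_le_neg_one {a c : K} (hc : c ≤ -1) (hac : a + 1 ≤ c) :
    cornerFactor (a + 1) * cornerFactor (c - 1) ≤ cornerFactor a * cornerFactor c := by
  simp only [cornerFactor, div_mul_div_comm]
  rw [div_le_div_iff₀ (by nlinarith) (by nlinarith)]
  nlinarith [mul_nonneg (sub_nonneg.mpr hac) (by linarith : (0 : K) ≤ -(c - 1 + a))]

end CornerFactor

theorem Finset.prod_le_prod_of_eq_of_ne_of_ne {ι K : Type*} [DecidableEq ι] [CommRing K]
    [LinearOrder K] [IsStrictOrderedRing K] {s : Finset ι} {f g : ι → K} {i j : ι}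
    (hi : i ∈ s) (hj : j ∈ s) (hij : i ≠ j) (hf : ∀ t ∈ s, 0 ≤ f t)
    (hfg : ∀ t ∈ s, t ≠ i → t ≠ j → f t = g t) (hle : f i * f j ≤ g i * g j) :
    ∏ t ∈ s, f t ≤ ∏ t ∈ s, g t := by
  have hj' : j ∈ s.erase i := mem_erase.mpr ⟨hij.symm, hj⟩
  have hrest : ∀ t ∈ (s.erase i).erase j, t ∈ s ∧ f t = g t := fun t ht => by
    obtain ⟨htj, hti, hts⟩ : t ≠ j ∧ t ≠ i ∧ t ∈ s := by simpa using ht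
    exact ⟨hts, hfg t hts hti htj⟩
  rw [← mul_prod_erase s f hi, ← mul_prod_erase s g hi, ← mul_prod_erase _ f hj',
    ← mul_prod_erase _ g hj', ← mul_assoc, ← mul_assoc, prod_congr rfl fun t ht => (hrest t ht).2]
  exact mul_le_mul_of_nonneg_right hle
    (prod_nonneg fun t ht => (hrest t ht).2 ▸ hf t (hrest t ht).1)

section Partitions

theorem psize_eq_sum_range {f : ℕ → ℕ} {N : ℕ} (hN : ∀ a, N ≤ a → f a = 0) :
    psize f = ∑ a ∈ range N, f a :=
  finsum_eq_sum_of_support_subset f fun a ha => by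
    by_contra h
    exact ha (hN a (by simpa using h))

theorem psize_update_succ {f : ℕ → ℕ} {N : ℕ} (hN : ∀ a, N ≤ a → f a = 0) (r : ℕ) :
    psize (Function.update f r (f r + 1)) = psize f + 1 := by
  have hN' : ∀ a, N + r + 1 ≤ a → f a = 0 := fun a ha => hN a (by omega)
  have hr : r ∈ range (N + r + 1) := mem_range.mpr (by omega)
  rw [psize_eq_sum_range (N := N + r + 1) fun a ha => by
      rw [Function.update_of_ne (by omega), hN' a ha],
    psize_eq_sum_range hN', sum_update_of_mem hr, ← add_sum_erase _ _ hr, sdiff_singleton_eq_erase]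
  ring

theorem eq_zero_of_psize_eq_zero {f : ℕ → ℕ} (hf : isPartition f) (h : psize f = 0) :
    f = fun _ => 0 := by
  obtain ⟨N, hN⟩ := hf.2
  rw [psize_eq_sum_range hN, sum_eq_zero_iff] at h
  funext a
  rcases lt_or_ge a N with ha | ha
  · exact h a (mem_range.mpr ha)
  · exact hN a ha

variable {lam : ℕ → ℕ} {r : ℕ}

theorem isPartition_update_pred (hlam : isPartition lam) (hr : lam (r + 1) < lam r) :
    isPartition (Function.update lam r (lam r - 1)) := by
  refine ⟨fun a b hab => ?_, ?_⟩
  · have hmono := hlam.1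
    simp only [Function.update_apply]
    split_ifs with hb ha ha
    · omega
    · have := hmono (show a ≤ r by omega); omega
    · have := hmono (show r + 1 ≤ b by omega); omega
    · exact hmono hab
  · obtain ⟨N, hN⟩ := hlam.2
    exact ⟨N + r + 1, fun a ha => by rw [Function.update_of_ne (by omega), hN a (by omega)]⟩

theorem eq_update_update_pred (hr : 0 < lam r) :
    lam = Function.update (Function.update lam r (lam r - 1)) r
      (Function.update lam r (lam r - 1) r + 1) := by
  rw [Function.update_idem, Function.update_self, Nat.sub_add_cancel hr, Function.update_eq_self]

theorem psize_update_pred (hlam : isPartition lam) (hr : 0 < lam r) :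
    psize (Function.update lam r (lam r - 1)) + 1 = psize lam := by
  obtain ⟨N, hN⟩ := hlam.2
  conv_rhs => rw [eq_update_update_pred hr]
  exact (psize_update_succ (N := N + r + 1) (fun a ha => by
    rw [Function.update_of_ne (by omega), hN a (by omega)]) r).symm

end Partitions

section Paths

def youngPaths (lam : ℕ → ℕ) : Set (ℕ → ℕ → ℕ) :=
  { p : ℕ → ℕ → ℕ |
    p 0 = (fun _ => 0) ∧ (∀ k, isPartition (p k)) ∧
    (∀ k, k < psize lam → addBox (p k) (p (k + 1))) ∧
    (∀ k, psize lam ≤ k → p k = lam) }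

theorem dimY_eq_ncard_youngPaths (lam : ℕ → ℕ) : dimY lam = (youngPaths lam).ncard := rfl

def extendPath (lam : ℕ → ℕ) (n : ℕ) (q : ℕ → ℕ → ℕ) : ℕ → ℕ → ℕ :=
  fun k => if k ≤ n then q k else lam

def truncatePath (n : ℕ) (p : ℕ → ℕ → ℕ) : ℕ → ℕ → ℕ :=
  fun k => p (min k n)

variable {lam mu : ℕ → ℕ} {p q : ℕ → ℕ → ℕ} {n : ℕ}

theorem psize_of_mem_youngPaths (hp : p ∈ youngPaths lam) {k : ℕ} (hk : k ≤ psize lam) :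
    psize (p k) = k := by
  induction k with
  | zero => rw [hp.1]; simp [psize]
  | succ k ih =>
    obtain ⟨r, hr⟩ := hp.2.2.1 k (by omega)
    obtain ⟨N, hN⟩ := (hp.2.1 k).2
    rw [hr, psize_update_succ hN, ih (by omega)]

theorem truncatePath_mem_youngPaths (hp : p ∈ youngPaths lam) (hn : n ≤ psize lam) :
    truncatePath n p ∈ youngPaths (p n) := by
  have hpn := psize_of_mem_youngPaths hp hn
  refine ⟨by simp [truncatePath, hp.1], fun k => hp.2.1 _, fun k hk => ?_, fun k hk => ?_⟩
  · rw [hpn] at hk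
    simpa [truncatePath, Nat.min_eq_left hk.le, Nat.min_eq_left hk] using hp.2.2.1 k (by omega)
  · simp [truncatePath, Nat.min_eq_right (hpn ▸ hk : n ≤ k)]

theorem extendPath_truncatePath (hp : p ∈ youngPaths lam) (hn : psize lam = n + 1) :
    extendPath lam n (truncatePath n p) = p := by
  funext k
  by_cases hk : k ≤ n
  · simp [extendPath, truncatePath, hk]
  · simp [extendPath, hk, hp.2.2.2 k (by omega)]

theorem extendPath_mem_youngPaths (hlam : isPartition lam) (hn : psize lam = n + 1)
    (hmu : psize mu = n) (hadd : addBox mu lam) (hq : q ∈ youngPaths mu) :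
    extendPath lam n q ∈ youngPaths lam := by
  refine ⟨by simp [extendPath, hq.1], fun k => ?_, fun k hk => ?_, fun k hk => ?_⟩
  · by_cases hk : k ≤ n <;> simp [extendPath, hk, hq.2.1 k, hlam]
  · rcases (show k < n ∨ k = n by omega) with hk | rfl
    · simpa [extendPath, hk.le, hk] using hq.2.2.1 k (by omega)
    · simpa [extendPath, hq.2.2.2 k hmu.le] using hadd
  · simp [extendPath, show ¬k ≤ n by omega]

theorem exists_corner_of_mem_youngPaths (hp : p ∈ youngPaths lam) (hn : psize lam = n + 1) :
    ∃ r, lam (r + 1) < lam r ∧ p n = Function.update lam r (lam r - 1) := by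
  obtain ⟨r, hr⟩ := hp.2.2.1 n (by omega)
  rw [hp.2.2.2 (n + 1) hn.le] at hr
  have hmono := (hp.2.1 n).1 (show r ≤ r + 1 by omega)
  refine ⟨r, ?_, ?_⟩
  · rw [hr, Function.update_self, Function.update_of_ne (by omega)]
    omega
  · rw [hr, Function.update_idem, Function.update_self, Nat.add_sub_cancel,
      Function.update_eq_self]

theorem youngPaths_eq_biUnion (hlam : isPartition lam) (hn : psize lam = n + 1) {m : ℕ}
    (hm : ∀ s, m ≤ s → lam s = 0) :
    youngPaths lam = ⋃ r ∈ (range m).filter (fun r => lam (r + 1) < lam r),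
      extendPath lam n '' youngPaths (Function.update lam r (lam r - 1)) := by
  ext p
  simp only [Set.mem_iUnion, Set.mem_image, mem_filter, mem_range, exists_prop]
  constructor
  · intro hp
    obtain ⟨r, hr, hpn⟩ := exists_corner_of_mem_youngPaths hp hn
    have hrm : r < m := by
      by_contra h
      have := hm r (by omega)
      omega
    refine ⟨r, ⟨hrm, hr⟩, truncatePath n p, ?_, extendPath_truncatePath hp hn⟩
    rw [← hpn]
    exact truncatePath_mem_youngPaths hp (by omega)
  · rintro ⟨r, ⟨-, hr⟩, q, hq, rfl⟩
    have hsize := psize_update_pred hlam (by omega : 0 < lam r)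
    exact extendPath_mem_youngPaths hlam hn (by omega) ⟨r, eq_update_update_pred (by omega)⟩ hq

theorem dimY_of_psize_eq_zero (hlam : isPartition lam) (h : psize lam = 0) : dimY lam = 1 := by
  have hpaths : youngPaths lam = {fun _ => lam} := by
    refine Set.eq_singleton_iff_unique_mem.mpr
      ⟨⟨eq_zero_of_psize_eq_zero hlam h, fun _ => hlam, by simp [h], fun _ _ => rfl⟩,
        fun p hp => funext fun k => hp.2.2.2 k (by omega)⟩
  rw [dimY_eq_ncard_youngPaths, hpaths, Set.ncard_singleton]

theorem youngPaths_finite (hlam : isPartition lam) : (youngPaths lam).Finite := by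
  induction hn : psize lam generalizing lam with
  | zero =>
    refine (Set.finite_singleton fun _ => lam).subset fun p hp => ?_
    exact funext fun k => hp.2.2.2 k (by omega)
  | succ n ih =>
    obtain ⟨m, hm⟩ := hlam.2
    rw [youngPaths_eq_biUnion hlam hn hm]
    refine Set.Finite.biUnion (finite_toSet _) fun r hr => (ih ?_ ?_).image _
    · exact isPartition_update_pred hlam (mem_filter.mp hr).2
    · have := psize_update_pred hlam (r := r) (by have := (mem_filter.mp hr).2; omega)
      omega

theorem extendPath_injOn (hmu : psize mu = n) : Set.InjOn (extendPath lam n) (youngPaths mu) := by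
  intro q hq q' hq' h
  funext k
  by_cases hk : k ≤ n
  · simpa [extendPath, hk] using congrFun h k
  · rw [hq.2.2.2 k (by omega), hq'.2.2.2 k (by omega)]

theorem dimY_eq_sum_corners (hlam : isPartition lam) (hn : psize lam = n + 1) {m : ℕ}
    (hm : ∀ s, m ≤ s → lam s = 0) :
    dimY lam = ∑ r ∈ range m,
      if lam (r + 1) < lam r then dimY (Function.update lam r (lam r - 1)) else 0 := by
  set F := (range m).filter (fun r => lam (r + 1) < lam r)
  have hsize : ∀ r ∈ F, psize (Function.update lam r (lam r - 1)) = n := fun r hr => by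
    have := psize_update_pred hlam (r := r) (by have := (mem_filter.mp hr).2; omega)
    omega
  have hdisj : (F : Set ℕ).PairwiseDisjoint
      fun r => extendPath lam n '' youngPaths (Function.update lam r (lam r - 1)) := by
    intro r hr r' hr' hne
    refine Set.disjoint_left.mpr ?_
    rintro _ ⟨q, hq, rfl⟩ ⟨q', hq', h⟩
    have hn' := congrFun (congrFun h n) r
    simp only [extendPath, le_refl, if_true, hq.2.2.2 n (hsize r hr).le,
      hq'.2.2.2 n (hsize r' hr').le, Function.update_self, Function.update_of_ne hne] at hn'
    have := (mem_filter.mp hr).2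
    omega
  rw [dimY_eq_ncard_youngPaths, youngPaths_eq_biUnion hlam hn hm, ← Finset.set_biUnion_coe,
    Set.Finite.ncard_biUnion (finite_toSet F) (fun r hr =>
      (youngPaths_finite (isPartition_update_pred hlam (mem_filter.mp hr).2)).image _) hdisj,
    finsum_mem_coe_finset, sum_filter]
  refine sum_congr rfl fun r hr => ?_
  split_ifs with hcorner
  · exact (extendPath_injOn (hsize r (mem_filter.mpr ⟨hr, hcorner⟩))).ncard_image
  · rfl

end Paths

section Frobenius

open Nat

def shifted (lam : ℕ → ℕ) (m : ℕ) : ℕ → ℕ := fun s => lam s + (m - 1 - s)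

variable {lam mu : ℕ → ℕ} {m r : ℕ}

theorem shifted_lt_shifted (hlam : Antitone lam) {s t : ℕ} (hst : s < t) (ht : t < m) :
    shifted lam m t < shifted lam m s := by
  have := hlam hst.le
  simp only [shifted]
  omega

theorem strictAntiOn_shifted (hlam : Antitone lam) :
    StrictAntiOn (fun s => (shifted lam m s : ℝ)) (Set.Iio m) :=
  fun _ _ _ ht hst => Nat.cast_lt.mpr (shifted_lt_shifted hlam hst ht)

theorem sum_shifted (hm : ∀ s, m ≤ s → lam s = 0) :
    ∑ s ∈ range m, shifted lam m s = psize lam + m.choose 2 := by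
  have hstair : ∑ s ∈ range m, (m - 1 - s) = m.choose 2 := by
    rw [sum_range_reflect (fun s => s) m, sum_range_id, Nat.choose_two_right]
  rw [psize_eq_sum_range hm, ← hstair, ← sum_add_distrib]
  rfl

theorem shifted_of_addBox (hadd : lam = Function.update mu r (mu r + 1)) :
    (fun s => (shifted mu m s : ℝ)) =
      Function.update (fun s => (shifted lam m s : ℝ)) r (shifted lam m r - 1) := by
  funext s
  rcases eq_or_ne s r with rfl | hs
  · simp only [shifted, cast_add, hadd, Function.update_self, cast_one]
    ring
  · simp [shifted, hadd, hs]

theorem prod_factorial_shifted_of_addBox (hadd : lam = Function.update mu r (mu r + 1))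
    (hr : r < m) :
    ∏ s ∈ range m, (shifted lam m s)! = shifted lam m r * ∏ s ∈ range m, (shifted mu m s)! := by
  have hrm := mem_range.mpr hr
  have hrest : ∀ s ∈ (range m).erase r, (shifted lam m s)! = (shifted mu m s)! := fun s hs => by
    simp only [shifted, hadd, Function.update_of_ne (ne_of_mem_erase hs)]
  have hrow : shifted lam m r = shifted mu m r + 1 := by
    simp only [shifted, hadd, Function.update_self]
    omega
  rw [← mul_prod_erase _ _ hrm, ← mul_prod_erase _ (fun s => (shifted mu m s)!) hrm,
    prod_congr rfl hrest, hrow, Nat.factorial_succ, mul_assoc]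

theorem vandermondeProd_shifted_of_addBox (hlam : Antitone lam)
    (hadd : lam = Function.update mu r (mu r + 1)) (hr : r < m) :
    vandermondeProd m (fun s => (shifted mu m s : ℝ)) =
      vandermondeProd m (fun s => (shifted lam m s : ℝ)) *
        cornerRatio (range m) (fun s => (shifted lam m s : ℝ)) r := by
  rw [shifted_of_addBox hadd]
  exact vandermondeProd_update_sub_one
    (by rw [coe_range]; exact (strictAntiOn_shifted hlam).injOn) hr

-- A row that is not a corner either has the length of the next row, which makes a factor of
-- `cornerRatio` vanish, or is the last, empty, row.
theorem shifted_mul_cornerRatio_eq_zero (hlam : Antitone lam) (hm : ∀ s, m ≤ s → lam s = 0)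
    (hr : r < m) (hcorner : ¬lam (r + 1) < lam r) :
    (shifted lam m r : ℝ) * cornerRatio (range m) (fun s => (shifted lam m s : ℝ)) r = 0 := by
  have hle := hlam (show r ≤ r + 1 by omega)
  rcases lt_or_ge (r + 1) m with hr1 | hr1
  · refine mul_eq_zero_of_right _
      (prod_eq_zero (i := r + 1) (by simp only [mem_erase, mem_range]; omega) ?_)
    have : shifted lam m r = shifted lam m (r + 1) + 1 := by simp only [shifted]; omega
    simp [cornerFactor, this]
  · refine mul_eq_zero_of_left ?_ _
    have := hm (r + 1) hr1
    simp only [shifted, Nat.cast_eq_zero]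
    omega

theorem vandermondeProd_shifted_zero :
    vandermondeProd m (fun s => (shifted (fun _ => 0) m s : ℝ)) =
      ∏ s ∈ range m, ((shifted (fun _ => 0) m s)! : ℝ) := by
  have hinner : ∀ t ∈ range m, ∏ s ∈ range t,
      ((shifted (fun _ => 0) m s : ℝ) - shifted (fun _ => 0) m t) = (t ! : ℝ) := by
    intro t ht
    rw [← prod_range_add_one_eq_factorial, ← prod_range_reflect, Nat.cast_prod]
    refine prod_congr rfl fun s hs => ?_
    have : shifted (fun _ => 0) m (t - 1 - s) = shifted (fun _ => 0) m t + (s + 1) := by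
      simp only [shifted, mem_range] at hs ht ⊢
      omega
    rw [this]
    push_cast
    ring
  rw [vandermondeProd, prod_congr rfl hinner, ← prod_range_reflect (fun s => (s ! : ℝ))]
  simp [shifted]

theorem dimY_mul_prod_factorial (hlam : isPartition lam) (hm : ∀ s, m ≤ s → lam s = 0) :
    (dimY lam : ℝ) * ∏ s ∈ range m, ((shifted lam m s)! : ℝ) =
      (psize lam)! * vandermondeProd m (fun s => (shifted lam m s : ℝ)) := by
  induction hn : psize lam generalizing lam with
  | zero =>
    obtain rfl := eq_zero_of_psize_eq_zero hlam hn
    rw [dimY_of_psize_eq_zero hlam hn, vandermondeProd_shifted_zero]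
    simp
  | succ n ih =>
    set x : ℕ → ℝ := fun s => shifted lam m s with hx
    have hterm : ∀ r ∈ range m,
        ((if lam (r + 1) < lam r then dimY (Function.update lam r (lam r - 1)) else 0 : ℕ) : ℝ) *
          ∏ s ∈ range m, ((shifted lam m s)! : ℝ) =
        n ! * vandermondeProd m x * (x r * cornerRatio (range m) x r) := by
      intro r hr
      rw [mem_range] at hr
      split_ifs with hcorner
      · have hmu := isPartition_update_pred hlam hcorner
        have hmun := psize_update_pred hlam (r := r) (by omega)
        have hmum : ∀ s, m ≤ s → Function.update lam r (lam r - 1) s = 0 := fun s hs => by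
          rw [Function.update_of_ne (by omega), hm s hs]
        have hadd := eq_update_update_pred (lam := lam) (r := r) (by omega)
        generalize Function.update lam r (lam r - 1) = mu at hmu hmun hmum hadd ⊢
        have hfac : ∏ s ∈ range m, ((shifted lam m s)! : ℝ) =
            shifted lam m r * ∏ s ∈ range m, ((shifted mu m s)! : ℝ) := by
          exact_mod_cast prod_factorial_shifted_of_addBox hadd hr
        rw [hfac, mul_left_comm, ih hmu hmum (by omega),
          vandermondeProd_shifted_of_addBox hlam.1 hadd hr]
        ring
      · rw [Nat.cast_zero, zero_mul, shifted_mul_cornerRatio_eq_zero hlam.1 hm hr hcorner, mul_zero]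
    have hsum : ∑ s ∈ range m, x s = (n + 1 : ℕ) + (m.choose 2 : ℕ) := by
      simp only [hx]
      exact_mod_cast hn ▸ sum_shifted hm
    rw [dimY_eq_sum_corners hlam hn hm, Nat.cast_sum, sum_mul, sum_congr rfl hterm, ← mul_sum,
      sum_mul_cornerRatio _ _ (by rw [coe_range]; exact (strictAntiOn_shifted hlam.1).injOn),
      card_range, hsum, Nat.factorial_succ]
    push_cast
    ring

end Frobenius

section Ratio

open Nat

variable {lam mu : ℕ → ℕ} {m r : ℕ}

theorem dimY_pos (hlam : isPartition lam) : 0 < dimY lam := by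
  obtain ⟨m, hm⟩ := hlam.2
  have hformula := dimY_mul_prod_factorial hlam hm
  have hpos : (0 : ℝ) < (psize lam)! * vandermondeProd m (fun s => (shifted lam m s : ℝ)) :=
    mul_pos (by positivity) (vandermondeProd_pos (strictAntiOn_shifted hlam.1))
  rw [← hformula] at hpos
  exact_mod_cast pos_of_mul_pos_left hpos (by positivity)

theorem dimY_div_dimY_of_addBox (hmu : isPartition mu) (hlam : isPartition lam)
    (hadd : lam = Function.update mu r (mu r + 1)) (hm : ∀ s, m ≤ s → lam s = 0) :
    (dimY mu : ℝ) / dimY lam =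
      shifted lam m r / psize lam * cornerRatio (range m) (fun s => (shifted lam m s : ℝ)) r := by
  have hlam_r : lam r = mu r + 1 := by rw [hadd, Function.update_self]
  have hrm : r < m := by
    by_contra h
    have := hm r (by omega)
    omega
  have hmum : ∀ s, m ≤ s → mu s = 0 := fun s hs => by
    have := congrFun hadd s
    rw [Function.update_apply] at this
    split_ifs at this <;> have := hm s hs <;> omega
  have hsize : psize lam = psize mu + 1 := by rw [hadd]; exact psize_update_succ hmum r
  have hfac : ∏ s ∈ range m, ((shifted lam m s)! : ℝ) =
      shifted lam m r * ∏ s ∈ range m, ((shifted mu m s)! : ℝ) := by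
    exact_mod_cast prod_factorial_shifted_of_addBox hadd hrm
  have hP : (0 : ℝ) < ∏ s ∈ range m, ((shifted mu m s)! : ℝ) := by positivity
  have hlam_formula := dimY_mul_prod_factorial hlam hm
  have hmu_formula := dimY_mul_prod_factorial hmu hmum
  rw [vandermondeProd_shifted_of_addBox hlam.1 hadd hrm] at hmu_formula
  rw [hfac, hsize, Nat.factorial_succ] at hlam_formula
  rw [div_eq_iff (by exact_mod_cast (dimY_pos hlam).ne'), hsize]
  apply mul_right_cancel₀ hP.ne'
  rw [hmu_formula]
  field_simp
  push_cast at hlam_formula ⊢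
  linear_combination -cornerRatio (range m) (fun s => (shifted lam m s : ℝ)) r * hlam_formula

end Ratio

section Comparison

variable {lam hatlam : ℕ → ℕ} {m i hi r : ℕ}

theorem shifted_eq_of_moveBox (hmove : moveBox lam hatlam i hi) {s : ℕ} (hsi : s ≠ i)
    (hshi : s ≠ hi) : shifted hatlam m s = shifted lam m s := by
  simp only [shifted, hmove.2.2 s hsi hshi]

theorem shifted_sub_shifted_of_moveBox (hmove : moveBox lam hatlam i hi) (hir : i ≠ r)
    (hhir : hi ≠ r) :
    (shifted hatlam m r : ℝ) - shifted hatlam m i = shifted lam m r - shifted lam m i + 1 ∧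
    (shifted hatlam m r : ℝ) - shifted hatlam m hi = shifted lam m r - shifted lam m hi - 1 ∧
    ∀ s, s ≠ i → s ≠ hi →
      (shifted hatlam m r : ℝ) - shifted hatlam m s = shifted lam m r - shifted lam m s := by
  have hr := shifted_eq_of_moveBox (m := m) hmove hir.symm hhir.symm
  refine ⟨?_, ?_, fun s hsi hshi => by rw [hr, shifted_eq_of_moveBox hmove hsi hshi]⟩
  · have : shifted lam m i = shifted hatlam m i + 1 := by
      simp only [shifted, hmove.1]
      omega
    rw [hr, this]; push_cast; ring
  · have : shifted hatlam m hi = shifted lam m hi + 1 := by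
      simp only [shifted, hmove.2.1]
      omega
    rw [hr, this]; push_cast; ring

theorem cornerFactor_shifted_sub_nonneg (lam : ℕ → ℕ) (m r s : ℕ) :
    0 ≤ cornerFactor ((shifted lam m r : ℝ) - shifted lam m s) := by
  exact_mod_cast cornerFactor_intCast_nonneg (K := ℝ) ((shifted lam m r : ℤ) - shifted lam m s)

theorem cornerRatio_shifted_le_of_moveBox_of_lt (hlam : Antitone lam)
    (hmove : moveBox lam hatlam i hi) (hihi : i < hi) (hri : r < i) (hhim : hi < m) :
    cornerRatio (range m) (fun s => (shifted lam m s : ℝ)) r ≤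
      cornerRatio (range m) (fun s => (shifted hatlam m s : ℝ)) r := by
  obtain ⟨hsub_i, hsub_hi, hsub_rest⟩ :=
    shifted_sub_shifted_of_moveBox (m := m) (r := r) hmove (by omega) (by omega)
  have h_ri : (shifted lam m i : ℝ) + 1 ≤ shifted lam m r := by
    exact_mod_cast shifted_lt_shifted hlam hri (by omega)
  have h_ihi : (shifted lam m hi : ℝ) + 1 ≤ shifted lam m i := by
    exact_mod_cast shifted_lt_shifted hlam hihi hhim
  refine prod_le_prod_of_eq_of_ne_of_ne (i := i) (j := hi)
    (by simp only [mem_erase, mem_range]; omega) (by simp only [mem_erase, mem_range]; omega)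
    hihi.ne (fun s _ => cornerFactor_shifted_sub_nonneg lam m r s)
    (fun s _ hsi hshi => by rw [hsub_rest s hsi hshi]) ?_
  rw [hsub_i, hsub_hi]
  exact cornerFactor_mul_le_of_one_le (by linarith) (by linarith)

theorem cornerRatio_shifted_ge_of_moveBox_of_gt (hlam : Antitone lam)
    (hmove : moveBox lam hatlam i hi) (hihi : i < hi) (hhir : hi < r) (hrm : r < m) :
    cornerRatio (range m) (fun s => (shifted hatlam m s : ℝ)) r ≤
      cornerRatio (range m) (fun s => (shifted lam m s : ℝ)) r := by
  obtain ⟨hsub_i, hsub_hi, hsub_rest⟩ :=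
    shifted_sub_shifted_of_moveBox (m := m) (r := r) hmove (by omega) (by omega)
  have h_hir : (shifted lam m r : ℝ) + 1 ≤ shifted lam m hi := by
    exact_mod_cast shifted_lt_shifted hlam hhir hrm
  have h_ihi : (shifted lam m hi : ℝ) + 1 ≤ shifted lam m i := by
    exact_mod_cast shifted_lt_shifted hlam hihi (by omega)
  refine prod_le_prod_of_eq_of_ne_of_ne (i := i) (j := hi)
    (by simp only [mem_erase, mem_range]; omega) (by simp only [mem_erase, mem_range]; omega)
    hihi.ne (fun s _ => cornerFactor_shifted_sub_nonneg hatlam m r s)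
    (fun s _ hsi hshi => by rw [hsub_rest s hsi hshi]) ?_
  rw [hsub_i, hsub_hi]
  exact cornerFactor_mul_le_of_le_neg_one (by linarith) (by linarith)

end Comparison

theorem dim_ratio_monotonicity_general (n i hi r : ℕ)
    (lam hatlam mu hatmu : ℕ → ℕ)
    (hlam : isPartition lam) (hhatlam : isPartition hatlam)
    (hmu : isPartition mu) (hhatmu : isPartition hatmu)
    (hslam : psize lam = n) (hshatlam : psize hatlam = n)
    (hmove : moveBox lam hatlam i hi)
    (hihi : i < hi)
    (hadd : lam = Function.update mu r (mu r + 1))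
    (haddhat : hatlam = Function.update hatmu r (hatmu r + 1)) :
    (r < i → (dimY mu : ℝ) / (dimY lam : ℝ) ≤ (dimY hatmu : ℝ) / (dimY hatlam : ℝ)) ∧
    (hi < r → (dimY hatmu : ℝ) / (dimY hatlam : ℝ) ≤ (dimY mu : ℝ) / (dimY lam : ℝ)) := by
  obtain ⟨N, hN⟩ := hlam.2
  obtain ⟨N', hN'⟩ := hhatlam.2
  have hm : ∀ s, max N N' ≤ s → lam s = 0 := fun s hs => hN s (le_of_max_le_left hs)
  have hm' : ∀ s, max N N' ≤ s → hatlam s = 0 := fun s hs => hN' s (le_of_max_le_right hs)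
  have hhim : hi < max N N' := by
    by_contra h
    have := hm' hi (by omega)
    have := hmove.2.1
    omega
  have hrm : r < max N N' := by
    by_contra h
    have := hm r (by omega)
    rw [hadd, Function.update_self] at this
    omega
  rw [dimY_div_dimY_of_addBox hmu hlam hadd hm, dimY_div_dimY_of_addBox hhatmu hhatlam haddhat hm',
    hslam, hshatlam]
  constructor
  · intro hri
    rw [shifted_eq_of_moveBox hmove (by omega) (by omega)]
    exact mul_le_mul_of_nonneg_left
      (cornerRatio_shifted_le_of_moveBox_of_lt hlam.1 hmove hihi hri hhim) (by positivity)
  · intro hhir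
    rw [shifted_eq_of_moveBox hmove (by omega) (by omega)]
    exact mul_le_mul_of_nonneg_left
      (cornerRatio_shifted_ge_of_moveBox_of_gt hlam.1 hmove hihi hhir hrm) (by positivity)

theorem dim_ratio_monotonicity (n i hi r : ℕ)
    (lam hatlam mu hatmu : ℕ → ℕ)
    (hlam : isPartition lam) (hhatlam : isPartition hatlam)
    (hmu : isPartition mu) (hhatmu : isPartition hatmu)
    (hslam : psize lam = n) (hshatlam : psize hatlam = n)
    (hsmu : psize mu = n - 1) (hshatmu : psize hatmu = n - 1)
    (hmove : moveBox lam hatlam i hi) (hmovemu : moveBox mu hatmu i hi)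
    (hihi : i < hi)
    (hadd : lam = Function.update mu r (mu r + 1))
    (haddhat : hatlam = Function.update hatmu r (hatmu r + 1)) :
    (r < i → (dimY mu : ℝ) / (dimY lam : ℝ) ≤ (dimY hatmu : ℝ) / (dimY hatlam : ℝ)) ∧
    (hi < r → (dimY hatmu : ℝ) / (dimY hatlam : ℝ) ≤ (dimY mu : ℝ) / (dimY lam : ℝ)) :=
  dim_ratio_monotonicity_general n i hi r lam hatlam mu hatmu hlam hhatlam hmu hhatmu hslam hshatlam
    hmove hihi hadd haddhat
end

section
/- If λ, λ̂ are partitions of n with λ > λ̂ in dominance order, then there exists a partition ν of n with λ ≥ ν > λ̂ such that ν is obtained from λ̂ by moving a box from some position (î,ĵ) to a position (i,j) with î − i = 1 or ĵ − j = −1 (i.e., the covering relation by elementary box moves refines the dominance order: any two dominance-comparable distinct partitions are connected by a chain of such covers). -/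
open scoped BigOperators

def coverMove (nu hatlam : ℕ → ℕ) : Prop :=
  ∃ i hi, i ≠ hi ∧ moveBox nu hatlam i hi ∧ (hi = i + 1 ∨ hatlam hi + 1 = nu i)

private lemma psize_eq_range_sum (f : ℕ → ℕ) (N : ℕ) (hN : ∀ a, N ≤ a → f a = 0) :
    psize f = ∑ a ∈ Finset.range N, f a := by
  apply finsum_eq_sum_of_support_subset
  intro a ha
  simp only [Function.mem_support] at ha
  simp only [Finset.coe_range, Set.mem_Iio]
  by_contra h
  exact ha (hN a (le_of_not_gt h))

private lemma antitone_of_step (f : ℕ → ℕ) (h : ∀ k, f (k + 1) ≤ f k) :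
    ∀ ⦃a b : ℕ⦄, a ≤ b → f b ≤ f a := by
  intro a b hab
  induction b with
  | zero =>
      have ha : a = 0 := Nat.le_zero.mp hab
      rw [ha]
  | succ b ih =>
      rcases Nat.lt_or_ge a (b + 1) with h1 | h1
      · exact (h b).trans (ih (by omega))
      · have ha : a = b + 1 := by omega
        rw [ha]

/-- The cover relation by elementary box moves refines the dominance order. -/
theorem dominance_refined_by_covers (n : ℕ) (lam hatlam : ℕ → ℕ)
    (hlam : isPartition lam) (hhatlam : isPartition hatlam)
    (hslam : psize lam = n) (hshatlam : psize hatlam = n)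
    (hdom : dominates lam hatlam) (hne : lam ≠ hatlam) :
    ∃ nu : ℕ → ℕ, isPartition nu ∧ psize nu = n ∧
      dominates lam nu ∧ dominates nu hatlam ∧ nu ≠ hatlam ∧
      coverMove nu hatlam := by
  classical
  obtain ⟨hlmono, Nl, hNl⟩ := hlam
  obtain ⟨hmmono, Nm, hNm⟩ := hhatlam
  -- the first index where the partitions differ
  have hne' : ∃ k, lam k ≠ hatlam k := Function.ne_iff.mp hne
  set i := Nat.find hne' with hi_def
  have hi_ne : lam i ≠ hatlam i := Nat.find_spec hne'
  have hi_min : ∀ k, k < i → lam k = hatlam k := fun k hk =>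
    not_not.mp (Nat.find_min hne' hk)
  have hpref : ∀ k, k ≤ i →
      ∑ a ∈ Finset.range k, hatlam a = ∑ a ∈ Finset.range k, lam a := by
    intro k hk
    refine Finset.sum_congr rfl ?_
    intro a ha
    simp only [Finset.mem_range] at ha
    exact (hi_min a (lt_of_lt_of_le ha hk)).symm
  have hilt : hatlam i < lam i := by
    have h1 := hdom (i + 1)
    rw [Finset.sum_range_succ, Finset.sum_range_succ, hpref i le_rfl] at h1
    omega
  -- total sums equal n from some point on
  have hlamsum : ∀ K, Nl ≤ K → ∑ a ∈ Finset.range K, lam a = n := by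
    intro K hK
    rw [← hslam, psize_eq_range_sum lam Nl hNl]
    symm
    apply Finset.sum_subset (Finset.range_subset_range.mpr hK)
    intro a _ ha
    simp only [Finset.mem_range, not_lt] at ha
    exact hNl a ha
  have hmusum : ∀ K, Nm ≤ K → ∑ a ∈ Finset.range K, hatlam a = n := by
    intro K hK
    rw [← hshatlam, psize_eq_range_sum hatlam Nm hNm]
    symm
    apply Finset.sum_subset (Finset.range_subset_range.mpr hK)
    intro a _ ha
    simp only [Finset.mem_range, not_lt] at ha
    exact hNm a ha
  -- j : the first index after i where partial sums re-equalize
  have hQ : ∃ k, i < k ∧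
      ∑ a ∈ Finset.range (k + 1), hatlam a = ∑ a ∈ Finset.range (k + 1), lam a := by
    refine ⟨max (max Nl Nm) (i + 1), ?_, ?_⟩
    · omega
    · rw [hlamsum _ (by omega), hmusum _ (by omega)]
  set j := Nat.find hQ with hj_def
  obtain ⟨hij, hjeq⟩ : i < j ∧
      ∑ a ∈ Finset.range (j + 1), hatlam a = ∑ a ∈ Finset.range (j + 1), lam a :=
    Nat.find_spec hQ
  -- strictness of partial sums on (i, j]
  have hstrict : ∀ k, i < k → k ≤ j →
      ∑ a ∈ Finset.range k, hatlam a < ∑ a ∈ Finset.range k, lam a := by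
    intro k hik hkj
    rcases Nat.lt_or_ge (i + 1) k with hk | hk
    · -- k ≥ i + 2 : use minimality of j at k - 1
      have hlt : k - 1 < j := by omega
      have hne2 : ¬ (i < k - 1 ∧
          ∑ a ∈ Finset.range (k - 1 + 1), hatlam a =
            ∑ a ∈ Finset.range (k - 1 + 1), lam a) := Nat.find_min hQ hlt
      have hk1 : k - 1 + 1 = k := by omega
      rw [hk1] at hne2
      have hne3 : ¬ (∑ a ∈ Finset.range k, hatlam a = ∑ a ∈ Finset.range k, lam a) := by
        intro h; exact hne2 ⟨by omega, h⟩
      exact lt_of_le_of_ne (hdom k) hne3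
    · -- k = i + 1
      have hk1 : k = i + 1 := by omega
      subst hk1
      rw [Finset.sum_range_succ, Finset.sum_range_succ, hpref i le_rfl]
      omega
  -- descent of hatlam at j
  have hdescj : hatlam (j + 1) < hatlam j := by
    have h1 := hstrict j hij le_rfl
    have e1 : ∑ a ∈ Finset.range (j + 1), hatlam a =
        ∑ a ∈ Finset.range j, hatlam a + hatlam j := Finset.sum_range_succ _ _
    have e2 : ∑ a ∈ Finset.range (j + 1), lam a =
        ∑ a ∈ Finset.range j, lam a + lam j := Finset.sum_range_succ _ _
    have e3 : ∑ a ∈ Finset.range (j + 1 + 1), hatlam a =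
        ∑ a ∈ Finset.range (j + 1), hatlam a + hatlam (j + 1) := Finset.sum_range_succ _ _
    have e4 : ∑ a ∈ Finset.range (j + 1 + 1), lam a =
        ∑ a ∈ Finset.range (j + 1), lam a + lam (j + 1) := Finset.sum_range_succ _ _
    have h3 := hdom (j + 1 + 1)
    have h5 : lam (j + 1) ≤ lam j := hlmono (Nat.le_succ j)
    have h2 := hjeq
    omega
  -- q : first descent of hatlam at or after i+1
  have hR : ∃ k, i + 1 ≤ k ∧ hatlam (k + 1) < hatlam k := ⟨j, by omega, hdescj⟩
  set q := Nat.find hR with hq_def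
  obtain ⟨hiq, hdescq⟩ : i + 1 ≤ q ∧ hatlam (q + 1) < hatlam q := Nat.find_spec hR
  have hqj : q ≤ j := Nat.find_min' hR ⟨by omega, hdescj⟩
  -- hatlam is constant on [i+1, q]
  have hconst0 : ∀ d k, i + 1 ≤ k → k + d ≤ q → hatlam k = hatlam (k + d) := by
    intro d
    induction d with
    | zero => intro k _ _; rfl
    | succ d ih =>
        intro k hk hkd
        have h1 : hatlam k = hatlam (k + d) := ih k hk (by omega)
        have hlt : k + d < q := by omega
        have h2 : ¬ (i + 1 ≤ k + d ∧ hatlam (k + d + 1) < hatlam (k + d)) :=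
          Nat.find_min hR hlt
        have h3 : hatlam (k + d + 1) ≤ hatlam (k + d) := hmmono (Nat.le_succ _)
        have h4 : hatlam (k + d + 1) = hatlam (k + d) := by
          by_contra hne2
          exact h2 ⟨by omega, lt_of_le_of_ne h3 hne2⟩
        have e : k + (d + 1) = k + d + 1 := by omega
        rw [e, h4]
        exact h1
  have hconst : ∀ k, i + 1 ≤ k → k ≤ q → hatlam k = hatlam q := by
    intro k hk hkq
    have h1 := hconst0 (q - k) k hk (by omega)
    rwa [show k + (q - k) = q by omega] at h1
  -- choose p
  set p := if hatlam i = hatlam (i + 1) ∨ q = i + 1 then i else i + 1 with hp_def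
  have hp_or : (p = i ∧ (hatlam i = hatlam (i + 1) ∨ q = i + 1)) ∨
      (p = i + 1 ∧ hatlam i ≠ hatlam (i + 1) ∧ q ≠ i + 1) := by
    by_cases hc : hatlam i = hatlam (i + 1) ∨ q = i + 1
    · left; exact ⟨by rw [hp_def, if_pos hc], hc⟩
    · have hpe : p = i + 1 := by rw [hp_def, if_neg hc]
      push_neg at hc
      right; exact ⟨hpe, hc.1, hc.2⟩
  have hip : i ≤ p := by rcases hp_or with ⟨h, _⟩ | ⟨h, _⟩ <;> omega
  have hpq : p < q := by rcases hp_or with ⟨h, _⟩ | ⟨h, _, h2⟩ <;> omega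
  have hq1 : 1 ≤ hatlam q := by omega
  -- addability at p
  have haddp : ∀ m, m + 1 = p → hatlam p < hatlam m := by
    intro m hm
    rcases hp_or with ⟨hpe, _⟩ | ⟨hpe, hc1, _⟩
    · have hmi : m < i := by omega
      have h1 : lam m = hatlam m := hi_min m hmi
      have h2 : lam i ≤ lam m := hlmono (by omega)
      rw [hpe]
      omega
    · have hmi : m = i := by omega
      subst hmi
      have h3 : hatlam (i + 1) ≤ hatlam i := hmmono (Nat.le_succ i)
      rw [hpe]
      omega
  -- cover disjunction
  have hcov : q = p + 1 ∨ hatlam p = hatlam q := by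
    rcases hp_or with ⟨hpe, hc | hc⟩ | ⟨hpe, _, _⟩
    · right
      rw [hpe, hc]
      exact hconst (i + 1) le_rfl hiq
    · left; omega
    · right
      rw [hpe]
      exact hconst (i + 1) le_rfl hiq
  -- the new partition
  set nu : ℕ → ℕ :=
    fun a => if a = p then hatlam p + 1 else if a = q then hatlam q - 1 else hatlam a
    with hnu_def
  have hnup : nu p = hatlam p + 1 := by simp [hnu_def]
  have hnuq : nu q = hatlam q - 1 := by
    have h : q ≠ p := by omega
    simp [hnu_def, h]
  have hnuother : ∀ a, a ≠ p → a ≠ q → nu a = hatlam a := by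
    intro a h1 h2
    simp [hnu_def, h1, h2]
  -- nu is a partition
  have hstep : ∀ k, nu (k + 1) ≤ nu k := by
    intro k
    by_cases hk1 : k + 1 = p
    · rw [hk1, hnup, hnuother k (by omega) (by omega)]
      have h := haddp k hk1
      omega
    · by_cases hk2 : k = p
      · rw [hk2]
        by_cases hk3 : p + 1 = q
        · rw [hk3, hnuq, hnup]
          have h : hatlam q ≤ hatlam p := hmmono (by omega)
          omega
        · rw [hnuother (p + 1) (by omega) hk3, hnup]
          have h : hatlam (p + 1) ≤ hatlam p := hmmono (Nat.le_succ p)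
          omega
      · by_cases hk4 : k + 1 = q
        · rw [hk4, hnuq, hnuother k hk2 (by omega)]
          have h : hatlam q ≤ hatlam k := hmmono (by omega)
          omega
        · by_cases hk5 : k = q
          · rw [hk5, hnuq, hnuother (q + 1) (by omega) (by omega)]
            omega
          · rw [hnuother (k + 1) hk1 hk4, hnuother k hk2 hk5]
            exact hmmono (Nat.le_succ k)
  have hnubound : ∀ a, max Nm (q + 1) ≤ a → nu a = 0 := by
    intro a ha
    rw [hnuother a (by omega) (by omega)]
    exact hNm a (by omega)
  have hnupart : isPartition nu := ⟨antitone_of_step nu hstep, max Nm (q + 1), hnubound⟩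
  -- partial sums of nu
  have hsum : ∀ k, ∑ a ∈ Finset.range k, nu a =
      ∑ a ∈ Finset.range k, hatlam a + (if p < k ∧ k ≤ q then 1 else 0) := by
    intro k
    induction k with
    | zero => simp
    | succ k ih =>
        rw [Finset.sum_range_succ, Finset.sum_range_succ, ih]
        by_cases hk1 : k = p
        · rw [hk1, hnup]
          have h1 : ¬ (p < p ∧ p ≤ q) := by omega
          have h2 : p < p + 1 ∧ p + 1 ≤ q := by omega
          rw [if_neg h1, if_pos h2]
          omega
        · by_cases hk2 : k = q
          · rw [hk2, hnuq]
            have h1 : p < q ∧ q ≤ q := by omega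
            have h2 : ¬ (p < q + 1 ∧ q + 1 ≤ q) := by omega
            rw [if_pos h1, if_neg h2]
            omega
          · rw [hnuother k hk1 hk2]
            have h3 : (if p < k ∧ k ≤ q then (1:ℕ) else 0) =
                (if p < k + 1 ∧ k + 1 ≤ q then (1:ℕ) else 0) := by
              by_cases h : p < k ∧ k ≤ q
              · rw [if_pos h, if_pos (by omega)]
              · rw [if_neg h, if_neg (by omega)]
            omega
  -- psize nu = n
  have hnusize : psize nu = n := by
    rw [psize_eq_range_sum nu (max Nm (q + 1)) hnubound, hsum (max Nm (q + 1)),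
      if_neg (by omega), hmusum (max Nm (q + 1)) (by omega)]
    omega
  -- dominance
  have hdom1 : dominates lam nu := by
    intro k
    rw [hsum k]
    by_cases h : p < k ∧ k ≤ q
    · rw [if_pos h]
      have := hstrict k (by omega) (by omega)
      omega
    · rw [if_neg h]
      have := hdom k
      omega
  have hdom2 : dominates nu hatlam := by
    intro k
    rw [hsum k]
    omega
  have hneq : nu ≠ hatlam := by
    intro h
    have := congrFun h p
    rw [hnup] at this
    omega
  refine ⟨nu, hnupart, hnusize, hdom1, hdom2, hneq,
    ⟨p, q, by omega, ⟨hnup, ?_, hnuother⟩, ?_⟩⟩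
  · rw [hnuq]; omega
  · rcases hcov with h | h
    · left; omega
    · right; rw [hnup, h]
end

section
/- Let (α,β), (α̂,β̂) ∈ Ω, where Ω is the set of pairs of nonincreasing nonnegative sequences with Σ(α_i + β_i) ≤ 1. Define p_n(α,β) = Σ_i α_i^n + (−1)^{n−1} Σ_i β_i^n for n ≥ 2. Then |p_n(α,β) − p_n(α̂,β̂)| ≤ 4n · d∞((α,β),(α̂,β̂)), where d∞ is the sup distance max(sup_i|α_i − α̂_i|, sup_i|β_i − β̂_i|). -/
set_option maxHeartbeats 1000000

lemma pow_sub_pow_aux {a b : ℝ} (hb : 0 ≤ b) (hba : b ≤ a) (ha : a ≤ 1) {n : ℕ} (hn : 2 ≤ n) :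
    a ^ n - b ^ n ≤ n * (a + b) * (a - b) := by
  have ha0 : 0 ≤ a := hb.trans hba
  have hb1 : b ≤ 1 := hba.trans ha
  rw [← geom_sum₂_mul a b n]
  have hsum : (∑ i ∈ Finset.range n, a ^ i * b ^ (n - 1 - i)) ≤ n * (a + b) := by
    calc (∑ i ∈ Finset.range n, a ^ i * b ^ (n - 1 - i))
        ≤ ∑ i ∈ Finset.range n, (a + b) := by
          apply Finset.sum_le_sum
          intro i hi
          rcases Nat.eq_zero_or_pos i with h0 | hpos
          · subst h0
            have h1 : 1 ≤ n - 1 - 0 := by omega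
            have : b ^ (n - 1 - 0) ≤ b ^ 1 := pow_le_pow_of_le_one hb hb1 h1
            simpa using this.trans (by linarith)
          · have h1 : a ^ i ≤ a := by
              have := pow_le_pow_of_le_one ha0 ha hpos
              simpa using this
            have h2 : b ^ (n - 1 - i) ≤ 1 := pow_le_one₀ hb hb1
            calc a ^ i * b ^ (n - 1 - i) ≤ a * 1 :=
                  mul_le_mul h1 h2 (pow_nonneg hb _) ha0
              _ ≤ a + b := by linarith
      _ = n * (a + b) := by simp; ring
  exact mul_le_mul_of_nonneg_right hsum (sub_nonneg.2 hba)

lemma tsum_pow_sub_aux (f g : ℕ → ℝ) (hf0 : ∀ i, 0 ≤ f i) (hg0 : ∀ i, 0 ≤ g i)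
    (hf1 : ∀ i, f i ≤ 1) (hg1 : ∀ i, g i ≤ 1)
    (hsf : Summable f) (hsg : Summable g)
    (hSf : ∑' i, f i ≤ 1) (hSg : ∑' i, g i ≤ 1)
    {n : ℕ} (hn : 2 ≤ n) (D : ℝ) (hD : ∀ i, |f i - g i| ≤ D) :
    |(∑' i, f i ^ n) - ∑' i, g i ^ n| ≤ 2 * n * D := by
  have hD0 : 0 ≤ D := (abs_nonneg _).trans (hD 0)
  have hpow : ∀ (h : ℕ → ℝ), (∀ i, 0 ≤ h i) → (∀ i, h i ≤ 1) → ∀ i, h i ^ n ≤ h i := by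
    intro h h0 h1 i
    have := pow_le_pow_of_le_one (h0 i) (h1 i) (show 1 ≤ n by omega)
    simpa using this
  have hsfp : Summable (fun i => f i ^ n) :=
    hsf.of_nonneg_of_le (fun i => pow_nonneg (hf0 i) n) (hpow f hf0 hf1)
  have hsgp : Summable (fun i => g i ^ n) :=
    hsg.of_nonneg_of_le (fun i => pow_nonneg (hg0 i) n) (hpow g hg0 hg1)
  have habs : ∀ i, |f i ^ n - g i ^ n| ≤ n * D * (f i + g i) := by
    intro i
    rcases le_total (g i) (f i) with h | h
    · have h1 := pow_sub_pow_aux (hg0 i) h (hf1 i) hn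
      have h2 : f i - g i ≤ D := by have := hD i; rw [abs_of_nonneg (by linarith)] at this; linarith
      rw [abs_of_nonneg (sub_nonneg.2 (pow_le_pow_left₀ (hg0 i) h n))]
      have h3 := mul_le_mul_of_nonneg_left h2 (mul_nonneg (Nat.cast_nonneg n) (add_nonneg (hf0 i) (hg0 i)))
      linarith
    · have h1 := pow_sub_pow_aux (hf0 i) h (hg1 i) hn
      have h2 : g i - f i ≤ D := by have := hD i; rw [abs_sub_comm, abs_of_nonneg (by linarith)] at this; linarith
      rw [abs_sub_comm, abs_of_nonneg (sub_nonneg.2 (pow_le_pow_left₀ (hf0 i) h n))]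
      have h3 := mul_le_mul_of_nonneg_left h2 (mul_nonneg (Nat.cast_nonneg n) (add_nonneg (hg0 i) (hf0 i)))
      linarith
  have hsB : Summable (fun i => (n : ℝ) * D * (f i + g i)) := (hsf.add hsg).mul_left _
  have hsabs : Summable (fun i => |f i ^ n - g i ^ n|) :=
    hsB.of_nonneg_of_le (fun i => abs_nonneg _) habs
  calc |(∑' i, f i ^ n) - ∑' i, g i ^ n| = |∑' i, (f i ^ n - g i ^ n)| := by
        rw [Summable.tsum_sub hsfp hsgp]
    _ ≤ ∑' i, |f i ^ n - g i ^ n| := by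
        have h := norm_tsum_le_tsum_norm (f := fun i => f i ^ n - g i ^ n)
          (by simpa only [Real.norm_eq_abs] using hsabs)
        simpa only [Real.norm_eq_abs] using h
    _ ≤ ∑' i, (n : ℝ) * D * (f i + g i) := Summable.tsum_le_tsum habs hsabs hsB
    _ = (n : ℝ) * D * ((∑' i, f i) + ∑' i, g i) := by
        rw [tsum_mul_left, Summable.tsum_add hsf hsg]
    _ ≤ (n : ℝ) * D * 2 := by
        apply mul_le_mul_of_nonneg_left (by linarith) (by positivity)
    _ = 2 * n * D := by ring

/-- Lipschitz bound for power sums on the Thoma simplex. -/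
theorem power_sum_lipschitz (α β α' β' : ℕ → ℝ)
    (hα : Antitone α) (hβ : Antitone β) (hα' : Antitone α') (hβ' : Antitone β')
    (hα0 : ∀ i, 0 ≤ α i) (hβ0 : ∀ i, 0 ≤ β i)
    (hα'0 : ∀ i, 0 ≤ α' i) (hβ'0 : ∀ i, 0 ≤ β' i)
    (hsumα : Summable α) (hsumβ : Summable β)
    (hsumα' : Summable α') (hsumβ' : Summable β')
    (hle : ∑' i, (α i + β i) ≤ 1) (hle' : ∑' i, (α' i + β' i) ≤ 1)
    (n : ℕ) (hn : 2 ≤ n) :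
    |((∑' i, α i ^ n) + (-1 : ℝ) ^ (n - 1) * ∑' i, β i ^ n) -
        ((∑' i, α' i ^ n) + (-1 : ℝ) ^ (n - 1) * ∑' i, β' i ^ n)| ≤
      4 * n * max (⨆ i, |α i - α' i|) (⨆ i, |β i - β' i|) := by
  -- sums of each component are at most 1
  have key : ∀ (f g : ℕ → ℝ), (∀ i, 0 ≤ f i) → (∀ i, 0 ≤ g i) → Summable f → Summable g →
      (∑' i, (f i + g i)) ≤ 1 → (∑' i, f i ≤ 1) ∧ ∀ i, f i ≤ 1 := by
    intro f g hf0 hg0 hsf hsg hfg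
    have h1 : ∑' i, f i ≤ ∑' i, (f i + g i) :=
      Summable.tsum_le_tsum (fun i => le_add_of_nonneg_right (hg0 i)) hsf (hsf.add hsg)
    refine ⟨h1.trans hfg, fun i => ?_⟩
    exact (Summable.le_tsum hsf i (fun j _ => hf0 j)).trans (h1.trans hfg)
  obtain ⟨hSα, hα1⟩ := key α β hα0 hβ0 hsumα hsumβ hle
  obtain ⟨hSα', hα'1⟩ := key α' β' hα'0 hβ'0 hsumα' hsumβ' hle'
  have hβle : ∑' i, (β i + α i) ≤ 1 := by
    rw [show (fun i => β i + α i) = fun i => α i + β i from funext fun i => add_comm _ _]; exact hle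
  have hβle' : ∑' i, (β' i + α' i) ≤ 1 := by
    rw [show (fun i => β' i + α' i) = fun i => α' i + β' i from funext fun i => add_comm _ _]; exact hle'
  obtain ⟨hSβ, hβ1⟩ := key β α hβ0 hα0 hsumβ hsumα hβle
  obtain ⟨hSβ', hβ'1⟩ := key β' α' hβ'0 hα'0 hsumβ' hsumα' hβle'
  set D : ℝ := max (⨆ i, |α i - α' i|) (⨆ i, |β i - β' i|) with hDdef
  have hbddα : BddAbove (Set.range fun i => |α i - α' i|) := by
    refine ⟨2, ?_⟩; rintro x ⟨i, rfl⟩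
    have := abs_sub_abs_le_abs_sub (α i) (α' i)
    have h := abs_sub (α i) (α' i)
    calc |α i - α' i| ≤ |α i| + |α' i| := abs_sub _ _
      _ ≤ 2 := by rw [abs_of_nonneg (hα0 i), abs_of_nonneg (hα'0 i)]; linarith [hα1 i, hα'1 i]
  have hbddβ : BddAbove (Set.range fun i => |β i - β' i|) := by
    refine ⟨2, ?_⟩; rintro x ⟨i, rfl⟩
    calc |β i - β' i| ≤ |β i| + |β' i| := abs_sub _ _
      _ ≤ 2 := by rw [abs_of_nonneg (hβ0 i), abs_of_nonneg (hβ'0 i)]; linarith [hβ1 i, hβ'1 i]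
  have hDα : ∀ i, |α i - α' i| ≤ D := fun i => (le_ciSup hbddα i).trans (le_max_left _ _)
  have hDβ : ∀ i, |β i - β' i| ≤ D := fun i => (le_ciSup hbddβ i).trans (le_max_right _ _)
  have h1 := tsum_pow_sub_aux α α' hα0 hα'0 hα1 hα'1 hsumα hsumα' hSα hSα' hn D hDα
  have h2 := tsum_pow_sub_aux β β' hβ0 hβ'0 hβ1 hβ'1 hsumβ hsumβ' hSβ hSβ' hn D hDβ
  have hunit : |(-1 : ℝ) ^ (n - 1)| = 1 := by
    rw [abs_pow, abs_neg, abs_one, one_pow]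
  calc |((∑' i, α i ^ n) + (-1 : ℝ) ^ (n - 1) * ∑' i, β i ^ n) -
        ((∑' i, α' i ^ n) + (-1 : ℝ) ^ (n - 1) * ∑' i, β' i ^ n)|
      = |((∑' i, α i ^ n) - ∑' i, α' i ^ n) +
          (-1 : ℝ) ^ (n - 1) * ((∑' i, β i ^ n) - ∑' i, β' i ^ n)| := by ring_nf
    _ ≤ |(∑' i, α i ^ n) - ∑' i, α' i ^ n| +
          |(-1 : ℝ) ^ (n - 1) * ((∑' i, β i ^ n) - ∑' i, β' i ^ n)| := abs_add_le _ _
    _ = |(∑' i, α i ^ n) - ∑' i, α' i ^ n| + |(∑' i, β i ^ n) - ∑' i, β' i ^ n| := by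
        rw [abs_mul, hunit, one_mul]
    _ ≤ 2 * n * D + 2 * n * D := add_le_add h1 h2
    _ = 4 * n * D := by ring
end

section
/- Let ρ, ρ̂ be finite measures of equal total mass on a finite partially ordered set A. Then ρ stochastically dominates ρ̂ in the sense of Definition (ρ and ρ̂ decompose into atoms ρ_i, ρ̂_i of equal masses with supp(ρ_i) ≥ supp(ρ̂_i)) if and only if ρ(U) ≥ ρ̂(U) for every upper set U ⊆ A. -/
open Finset

section SDaux

variable {A : Type*} [Fintype A] [PartialOrder A] [DecidableEq A]

/-- Upper set predicate for finsets. -/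
def SDIsUp (U : Finset A) : Prop := ∀ a ∈ U, ∀ b, a ≤ b → b ∈ U

open scoped Classical in
/-- Termination measure: number of discrepancy points plus number of non-tight upper sets. -/
noncomputable def SDmu (rho rho' : A → ℝ) : ℕ :=
  (Finset.univ.filter fun a => rho a ≠ rho' a).card +
  (Finset.univ.powerset.filter fun U : Finset A =>
    SDIsUp U ∧ ∑ a ∈ U, rho' a ≠ ∑ a ∈ U, rho a).card

lemma SD_isUp_union {U V : Finset A} (hU : SDIsUp U) (hV : SDIsUp V) :
    SDIsUp (U ∪ V) := by
  intro a ha c hac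
  rcases Finset.mem_union.mp ha with h | h
  · exact Finset.mem_union_left _ (hU a h c hac)
  · exact Finset.mem_union_right _ (hV a h c hac)

lemma SD_isUp_inter {U V : Finset A} (hU : SDIsUp U) (hV : SDIsUp V) :
    SDIsUp (U ∩ V) := by
  intro a ha c hac
  have h := Finset.mem_inter.mp ha
  exact Finset.mem_inter.mpr ⟨hU a h.1 c hac, hV a h.2 c hac⟩

lemma SD_tight_union (rho rho' : A → ℝ)
    (h : ∀ U : Finset A, SDIsUp U → ∑ a ∈ U, rho' a ≤ ∑ a ∈ U, rho a)
    {U V : Finset A} (hU : SDIsUp U) (hV : SDIsUp V)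
    (tU : ∑ a ∈ U, rho' a = ∑ a ∈ U, rho a)
    (tV : ∑ a ∈ V, rho' a = ∑ a ∈ V, rho a) :
    ∑ a ∈ U ∪ V, rho' a = ∑ a ∈ U ∪ V, rho a := by
  have m1 := Finset.sum_union_inter (s₁ := U) (s₂ := V) (f := rho)
  have m2 := Finset.sum_union_inter (s₁ := U) (s₂ := V) (f := rho')
  have g1 := h _ (SD_isUp_union hU hV)
  have g2 := h _ (SD_isUp_inter hU hV)
  linarith

lemma SD_tight_sup {ι : Type*} (rho rho' : A → ℝ)
    (h : ∀ U : Finset A, SDIsUp U → ∑ a ∈ U, rho' a ≤ ∑ a ∈ U, rho a)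
    (s : Finset ι) (f : ι → Finset A)
    (hup : ∀ i ∈ s, SDIsUp (f i))
    (ht : ∀ i ∈ s, ∑ a ∈ f i, rho' a = ∑ a ∈ f i, rho a) :
    SDIsUp (s.sup f) ∧ ∑ a ∈ s.sup f, rho' a = ∑ a ∈ s.sup f, rho a := by
  classical
  induction s using Finset.cons_induction with
  | empty => exact ⟨by intro a ha; simp at ha, by simp⟩
  | cons i s his ih =>
    have ih' := ih (fun j hj => hup j (Finset.mem_cons_of_mem hj))
      (fun j hj => ht j (Finset.mem_cons_of_mem hj))
    rw [Finset.sup_cons]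
    have h1 := hup i (Finset.mem_cons_self i s)
    have h2 := ht i (Finset.mem_cons_self i s)
    exact ⟨SD_isUp_union h1 ih'.1,
      SD_tight_union rho rho' h h1 ih'.1 h2 ih'.2⟩

lemma SD_diag (rho : A → ℝ) (h1 : ∀ a, 0 ≤ rho a) :
    ∃ (k : ℕ) (x y : Fin k → A) (m : Fin k → ℝ),
      (∀ i, 0 ≤ m i) ∧ (∀ i, y i ≤ x i) ∧
      (∀ a, rho a = ∑ i, if x i = a then m i else 0) ∧
      (∀ a, rho a = ∑ i, if y i = a then m i else 0) := by
  classical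
  set e := (Fintype.equivFin A).symm with he
  have key : ∀ a, rho a = ∑ i, if e i = a then rho (e i) else 0 := by
    intro a
    have h := Fintype.sum_equiv e (fun i => if e i = a then rho (e i) else 0)
      (fun c => if c = a then rho c else 0) (fun i => rfl)
    rw [h, Finset.sum_ite_eq' Finset.univ a rho]
    simp
  exact ⟨Fintype.card A, e, e, fun i => rho (e i), fun i => h1 _,
    fun i => le_refl _, key, key⟩

lemma SD_key : ∀ (n : ℕ) (rho rho' : A → ℝ),
    (∀ a, 0 ≤ rho a) → (∀ a, 0 ≤ rho' a) →
    (∑ a, rho a = ∑ a, rho' a) →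
    (∀ U : Finset A, SDIsUp U → ∑ a ∈ U, rho' a ≤ ∑ a ∈ U, rho a) →
    SDmu rho rho' ≤ n →
    ∃ (k : ℕ) (x y : Fin k → A) (m : Fin k → ℝ),
      (∀ i, 0 ≤ m i) ∧ (∀ i, y i ≤ x i) ∧
      (∀ a, rho a = ∑ i, if x i = a then m i else 0) ∧
      (∀ a, rho' a = ∑ i, if y i = a then m i else 0) := by
  classical
  intro n
  induction n with
  | zero =>
    intro rho rho' h1 h2 hmass h hμ
    have hall : ∀ a, rho a = rho' a := by
      intro a
      by_contra hne
      have hmem : a ∈ (Finset.univ.filter fun a => rho a ≠ rho' a) :=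
        Finset.mem_filter.mpr ⟨Finset.mem_univ a, hne⟩
      have := Finset.card_pos.mpr ⟨a, hmem⟩
      unfold SDmu at hμ
      omega
    obtain ⟨k, x, y, m, hm0, hle, hsum, hsum'⟩ := SD_diag rho h1
    exact ⟨k, x, y, m, hm0, hle, hsum,
      fun a => by rw [← hall a]; exact hsum' a⟩
  | succ n ih =>
    intro rho rho' h1 h2 hmass h hμ
    by_cases hequal : ∀ a, rho a = rho' a
    · obtain ⟨k, x, y, m, hm0, hle, hsum, hsum'⟩ := SD_diag rho h1
      exact ⟨k, x, y, m, hm0, hle, hsum,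
        fun a => by rw [← hequal a]; exact hsum' a⟩
    · push_neg at hequal
      obtain ⟨a0, ha0⟩ := hequal
      -- there is a point with deficit
      have hb : ∃ b, rho b < rho' b := by
        by_contra hc
        push_neg at hc
        have : ∑ a, rho' a < ∑ a, rho a :=
          Finset.sum_lt_sum (fun i _ => hc i)
            ⟨a0, Finset.mem_univ _, lt_of_le_of_ne (hc a0) (Ne.symm ha0)⟩
        linarith
      obtain ⟨b, hbdef⟩ := hb
      set T0 : Finset A := Finset.univ.filter (fun z => b ≤ z) with hT0
      have hT0up : SDIsUp T0 := by
        intro a ha c hac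
        exact Finset.mem_filter.mpr ⟨Finset.mem_univ _,
          le_trans (Finset.mem_filter.mp ha).2 hac⟩
      have hbT0 : b ∈ T0 := Finset.mem_filter.mpr ⟨Finset.mem_univ _, le_refl b⟩
      set C : Finset A := Finset.univ.filter (fun z => b ≤ z ∧ rho' z < rho z) with hC
      have hCne : C.Nonempty := by
        by_contra hCe
        have hzz : ∀ z ∈ T0, rho z ≤ rho' z := by
          intro z hz
          by_contra hlt
          push_neg at hlt
          exact hCe ⟨z, Finset.mem_filter.mpr
            ⟨Finset.mem_univ _, (Finset.mem_filter.mp hz).2, hlt⟩⟩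
        have : ∑ a ∈ T0, rho a < ∑ a ∈ T0, rho' a :=
          Finset.sum_lt_sum hzz ⟨b, hbT0, hbdef⟩
        linarith [h T0 hT0up]
      -- there is an x in C not separated from b by any tight upper set
      have hx : ∃ x ∈ C, ∀ T : Finset A, SDIsUp T → x ∈ T → b ∉ T →
          ∑ a ∈ T, rho' a < ∑ a ∈ T, rho a := by
        by_contra hcon
        push_neg at hcon
        have hcon' : ∀ x ∈ C, ∃ T : Finset A, SDIsUp T ∧ x ∈ T ∧ b ∉ T ∧
            ∑ a ∈ T, rho' a = ∑ a ∈ T, rho a := by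
          intro x hxC
          obtain ⟨T, hT1, hT2, hT3, hT4⟩ := hcon x hxC
          exact ⟨T, hT1, hT2, hT3, le_antisymm (h T hT1) hT4⟩
        choose Tx hTx1 hTx2 hTx3 hTx4 using hcon'
        set TT : Finset A := C.attach.sup (fun p => Tx p.1 p.2) with hTT
        obtain ⟨hTTup, hTTt⟩ := SD_tight_sup rho rho' h C.attach
          (fun p => Tx p.1 p.2) (fun p _ => hTx1 p.1 p.2) (fun p _ => hTx4 p.1 p.2)
        have hbTT : b ∉ TT := by
          intro hmem
          obtain ⟨p, -, hp⟩ := Finset.mem_sup.mp hmem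
          exact hTx3 p.1 p.2 hp
        have hsub : ∀ z ∈ T0 \ TT, rho z ≤ rho' z := by
          intro z hz
          rw [Finset.mem_sdiff] at hz
          by_contra hlt
          push_neg at hlt
          have hzC : z ∈ C := Finset.mem_filter.mpr
            ⟨Finset.mem_univ _, (Finset.mem_filter.mp hz.1).2, hlt⟩
          have : Tx z hzC ≤ TT := by
            rw [hTT]
            exact Finset.le_sup (f := fun p : {z // z ∈ C} => Tx p.1 p.2)
              (Finset.mem_attach C ⟨z, hzC⟩)
          exact hz.2 (this (hTx2 z hzC))
        have hstrict : ∑ a ∈ T0 \ TT, rho a < ∑ a ∈ T0 \ TT, rho' a :=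
          Finset.sum_lt_sum hsub ⟨b, Finset.mem_sdiff.mpr ⟨hbT0, hbTT⟩, hbdef⟩
        have hdisj : Disjoint TT (T0 \ TT) := Finset.disjoint_sdiff
        have hcup : SDIsUp (TT ∪ T0) := SD_isUp_union hTTup hT0up
        have hcineq := h _ hcup
        have e1 : ∑ a ∈ TT ∪ T0, rho a = ∑ a ∈ TT, rho a + ∑ a ∈ T0 \ TT, rho a := by
          rw [← Finset.union_sdiff_self_eq_union, Finset.sum_union hdisj]
        have e2 : ∑ a ∈ TT ∪ T0, rho' a = ∑ a ∈ TT, rho' a + ∑ a ∈ T0 \ TT, rho' a := by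
          rw [← Finset.union_sdiff_self_eq_union, Finset.sum_union hdisj]
        linarith
      obtain ⟨x, hxC, hxsep⟩ := hx
      obtain ⟨-, hbx, hxg⟩ : x ∈ Finset.univ ∧ b ≤ x ∧ rho' x < rho x := by
        have := Finset.mem_filter.mp hxC
        exact ⟨this.1, this.2.1, this.2.2⟩
      have hxb : x ≠ b := by
        intro hxeq
        rw [hxeq] at hxg
        linarith
      -- the transfer amount
      set Sep : Finset (Finset A) := Finset.univ.powerset.filter
        (fun T => SDIsUp T ∧ x ∈ T ∧ b ∉ T) with hSep
      set Vals : Finset ℝ := insert (rho x - rho' x) (insert (rho' b - rho b)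
        (Sep.image (fun T => ∑ a ∈ T, rho a - ∑ a ∈ T, rho' a))) with hVals
      have hVne : Vals.Nonempty := ⟨_, Finset.mem_insert_self _ _⟩
      set ε := Vals.min' hVne with hε
      have hεpos : 0 < ε := by
        rw [hε, Finset.lt_min'_iff]
        intro y hy
        rw [hVals] at hy
        rcases Finset.mem_insert.mp hy with rfl | hy
        · linarith
        rcases Finset.mem_insert.mp hy with rfl | hy
        · linarith
        obtain ⟨T, hT, rfl⟩ := Finset.mem_image.mp hy
        have hT' := Finset.mem_filter.mp hT
        have := hxsep T hT'.2.1 hT'.2.2.1 hT'.2.2.2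
        linarith
      have hεle : ∀ y ∈ Vals, ε ≤ y := fun y hy => Finset.min'_le _ _ hy
      have hεx : ε ≤ rho x - rho' x := hεle _ (Finset.mem_insert_self _ _)
      have hεb : ε ≤ rho' b - rho b :=
        hεle _ (Finset.mem_insert_of_mem (Finset.mem_insert_self _ _))
      have hεmem : ε ∈ Vals := Finset.min'_mem _ _
      -- new measures after transferring ε from x to b
      set σ : A → ℝ := fun a => rho a - if a = x then ε else 0 with hσ
      set σ' : A → ℝ := fun a => rho' a - if a = b then ε else 0 with hσ'
      have h1σ : ∀ a, 0 ≤ σ a := by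
        intro a
        rw [hσ]
        by_cases hax : a = x
        · subst hax; simp; have := h2 a; linarith
        · simp [hax]; exact h1 a
      have h2σ : ∀ a, 0 ≤ σ' a := by
        intro a
        rw [hσ']
        by_cases hab : a = b
        · subst hab; simp; have := h1 a; linarith
        · simp [hab]; exact h2 a
      have hsumσ : ∀ (f : A → ℝ) (c : A) (U : Finset A), c ∈ U →
          ∑ a ∈ U, (f a - if a = c then ε else 0) = (∑ a ∈ U, f a) - ε := by
        intro f c U hc
        rw [Finset.sum_sub_distrib, Finset.sum_ite_eq' U c (fun _ => ε)]
        simp [hc]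
      have hsumσ' : ∀ (f : A → ℝ) (c : A) (U : Finset A), c ∉ U →
          ∑ a ∈ U, (f a - if a = c then ε else 0) = ∑ a ∈ U, f a := by
        intro f c U hc
        rw [Finset.sum_sub_distrib, Finset.sum_ite_eq' U c (fun _ => ε)]
        simp [hc]
      have hmassσ : ∑ a, σ a = ∑ a, σ' a := by
        rw [hσ, hσ', hsumσ rho x Finset.univ (Finset.mem_univ x),
          hsumσ rho' b Finset.univ (Finset.mem_univ b), hmass]
      have hupσ : ∀ U : Finset A, SDIsUp U → ∑ a ∈ U, σ' a ≤ ∑ a ∈ U, σ a := by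
        intro U hU
        by_cases hbU : b ∈ U
        · have hxU : x ∈ U := hU b hbU x hbx
          rw [hσ, hσ', hsumσ rho x U hxU, hsumσ rho' b U hbU]
          linarith [h U hU]
        · by_cases hxU : x ∈ U
          · have hUSep : U ∈ Sep := Finset.mem_filter.mpr
              ⟨Finset.mem_powerset.mpr (Finset.subset_univ U), hU, hxU, hbU⟩
            have hgap : ε ≤ ∑ a ∈ U, rho a - ∑ a ∈ U, rho' a :=
              hεle _ (Finset.mem_insert_of_mem (Finset.mem_insert_of_mem
                (Finset.mem_image_of_mem _ hUSep)))
            rw [hσ, hσ', hsumσ rho x U hxU, hsumσ' rho' b U hbU]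
            linarith
          · rw [hσ, hσ', hsumσ' rho x U hxU, hsumσ' rho' b U hbU]
            exact h U hU
      -- the measure strictly decreases
      have hmu : SDmu σ σ' < SDmu rho rho' := by
        classical
        unfold SDmu
        have hA : (Finset.univ.filter fun a => σ a ≠ σ' a) ⊆
            (Finset.univ.filter fun a => rho a ≠ rho' a) := by
          intro a ha
          rw [Finset.mem_filter] at ha ⊢
          refine ⟨Finset.mem_univ _, ?_⟩
          by_cases hax : a = x
          · subst hax; exact hxg.ne'
          by_cases hab : a = b
          · subst hab; exact hbdef.ne
          have e1 : σ a = rho a := by rw [hσ]; simp [hax]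
          have e2 : σ' a = rho' a := by rw [hσ']; simp [hab]
          rw [e1, e2] at ha
          exact ha.2
        have hB : (Finset.univ.powerset.filter fun U : Finset A =>
            SDIsUp U ∧ ∑ a ∈ U, σ' a ≠ ∑ a ∈ U, σ a) ⊆
            (Finset.univ.powerset.filter fun U : Finset A =>
            SDIsUp U ∧ ∑ a ∈ U, rho' a ≠ ∑ a ∈ U, rho a) := by
          intro U hUm
          rw [Finset.mem_filter] at hUm ⊢
          refine ⟨hUm.1, hUm.2.1, ?_⟩
          intro htight
          apply hUm.2.2
          by_cases hbU : b ∈ U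
          · have hxU : x ∈ U := hUm.2.1 b hbU x hbx
            rw [hσ, hσ', hsumσ rho x U hxU, hsumσ rho' b U hbU, htight]
          · by_cases hxU : x ∈ U
            · exact absurd htight (hxsep U hUm.2.1 hxU hbU).ne
            · rw [hσ, hσ', hsumσ' rho x U hxU, hsumσ' rho' b U hbU, htight]
        -- strictness from where the min is attained
        rw [hVals] at hεmem
        rcases Finset.mem_insert.mp hεmem with hcase | hεmem
        · -- ε = rho x - rho' x : discrepancy at x disappears
          have hxin : x ∈ (Finset.univ.filter fun a => rho a ≠ rho' a) :=
            Finset.mem_filter.mpr ⟨Finset.mem_univ _, hxg.ne'⟩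
          have hxout : x ∉ (Finset.univ.filter fun a => σ a ≠ σ' a) := by
            rw [Finset.mem_filter]
            rintro ⟨-, hne⟩
            apply hne
            rw [hσ, hσ']
            simp [hxb, hcase]
          have := Finset.card_lt_card ((Finset.ssubset_iff_of_subset hA).mpr
            ⟨x, hxin, hxout⟩)
          have := Finset.card_le_card hB
          omega
        rcases Finset.mem_insert.mp hεmem with hcase | hεmem
        · -- ε = rho' b - rho b : discrepancy at b disappears
          have hbin : b ∈ (Finset.univ.filter fun a => rho a ≠ rho' a) :=
            Finset.mem_filter.mpr ⟨Finset.mem_univ _, hbdef.ne⟩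
          have hbout : b ∉ (Finset.univ.filter fun a => σ a ≠ σ' a) := by
            rw [Finset.mem_filter]
            rintro ⟨-, hne⟩
            apply hne
            rw [hσ, hσ']
            simp [Ne.symm hxb, hcase]
          have := Finset.card_lt_card ((Finset.ssubset_iff_of_subset hA).mpr
            ⟨b, hbin, hbout⟩)
          have := Finset.card_le_card hB
          omega
        · -- ε is the gap of some separating upper set, which becomes tight
          obtain ⟨T, hTSep, hTval⟩ := Finset.mem_image.mp hεmem
          have hT' := Finset.mem_filter.mp hTSep
          have hTin : T ∈ (Finset.univ.powerset.filter fun U : Finset A =>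
              SDIsUp U ∧ ∑ a ∈ U, rho' a ≠ ∑ a ∈ U, rho a) :=
            Finset.mem_filter.mpr ⟨hT'.1, hT'.2.1,
              (hxsep T hT'.2.1 hT'.2.2.1 hT'.2.2.2).ne⟩
          have hTout : T ∉ (Finset.univ.powerset.filter fun U : Finset A =>
              SDIsUp U ∧ ∑ a ∈ U, σ' a ≠ ∑ a ∈ U, σ a) := by
            rw [Finset.mem_filter]
            rintro ⟨-, -, hne⟩
            apply hne
            rw [hσ, hσ', hsumσ rho x T hT'.2.2.1, hsumσ' rho' b T hT'.2.2.2]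
            linarith
          have := Finset.card_lt_card ((Finset.ssubset_iff_of_subset hB).mpr
            ⟨T, hTin, hTout⟩)
          have := Finset.card_le_card hA
          omega
      have hμn : SDmu σ σ' ≤ n := by omega
      obtain ⟨k, xs, ys, ms, hm0, hle, hx3, hy4⟩ := ih σ σ' h1σ h2σ hmassσ hupσ hμn
      refine ⟨k + 1, Fin.snoc xs x, Fin.snoc ys b, Fin.snoc ms ε, ?_, ?_, ?_, ?_⟩
      · intro i
        refine Fin.lastCases ?_ ?_ i
        · simp [Fin.snoc_last]; exact le_of_lt hεpos
        · intro j; simp [Fin.snoc_castSucc]; exact hm0 j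
      · intro i
        refine Fin.lastCases ?_ ?_ i
        · simp [Fin.snoc_last]; exact hbx
        · intro j; simp [Fin.snoc_castSucc]; exact hle j
      · intro a
        rw [Fin.sum_univ_castSucc]
        simp only [Fin.snoc_castSucc, Fin.snoc_last]
        rw [← hx3 a, hσ]
        rcases eq_or_ne a x with rfl | hax
        · simp
        · simp [hax, Ne.symm hax]
      · intro a
        rw [Fin.sum_univ_castSucc]
        simp only [Fin.snoc_castSucc, Fin.snoc_last]
        rw [← hy4 a, hσ']
        rcases eq_or_ne a b with rfl | hab
        · simp
        · simp [hab, Ne.symm hab]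

end SDaux

/-- Strassen-type characterization of stochastic dominance on a finite poset:
atom decomposition with pointwise comparison iff comparison on all upper sets. -/
theorem stochastic_dominance_iff_upper_sets
    {A : Type*} [Fintype A] [PartialOrder A] [DecidableEq A]
    (rho rho' : A → ℝ)
    (h1 : ∀ a, 0 ≤ rho a) (h2 : ∀ a, 0 ≤ rho' a)
    (hmass : ∑ a, rho a = ∑ a, rho' a) :
    (∃ (k : ℕ) (x y : Fin k → A) (m : Fin k → ℝ),
        (∀ i, 0 ≤ m i) ∧ (∀ i, y i ≤ x i) ∧
        (∀ a, rho a = ∑ i, if x i = a then m i else 0) ∧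
        (∀ a, rho' a = ∑ i, if y i = a then m i else 0)) ↔
      ∀ U : Finset A, (∀ a ∈ U, ∀ b, a ≤ b → b ∈ U) →
        ∑ a ∈ U, rho' a ≤ ∑ a ∈ U, rho a := by
  constructor
  · rintro ⟨k, x, y, m, hm, hyx, hx, hy⟩ U hU
    have e1 : ∑ a ∈ U, rho' a = ∑ i, if y i ∈ U then m i else 0 := by
      rw [Finset.sum_congr rfl (fun a _ => hy a), Finset.sum_comm]
      exact Finset.sum_congr rfl (fun i _ => Finset.sum_ite_eq U (y i) (fun _ => m i))
    have e2 : ∑ a ∈ U, rho a = ∑ i, if x i ∈ U then m i else 0 := by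
      rw [Finset.sum_congr rfl (fun a _ => hx a), Finset.sum_comm]
      exact Finset.sum_congr rfl (fun i _ => Finset.sum_ite_eq U (x i) (fun _ => m i))
    rw [e1, e2]
    apply Finset.sum_le_sum
    intro i _
    by_cases hyi : y i ∈ U
    · have hxi : x i ∈ U := hU (y i) hyi (x i) (hyx i)
      simp [hyi, hxi]
    · by_cases hxi : x i ∈ U
      · simpa [hyi, hxi] using hm i
      · simp [hyi, hxi]
  · intro h
    exact SD_key (SDmu rho rho') rho rho' h1 h2 hmass (fun U hU => h U hU) le_rfl
end

section
/- Let A be a finite poset and ρ_n, ρ̂_n sequences of probability measures on A with ρ_n ≤ ρ̂_n stochastically (ρ_n(U) ≤ ρ̂_n(U) for all upper sets U), and suppose the total variation distance between ρ_n and ρ̂_n tends to 0. If σ_n are probability measures with ρ_n ≤ σ_n ≤ ρ̂_n stochastically, then the total variation distance between σ_n and ρ_n tends to 0. -/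
section Aux
open scoped Classical

variable {A : Type*} [Fintype A] [PartialOrder A]

lemma upper_ge (a : A) : ∀ x ∈ Finset.univ.filter (fun x => a ≤ x),
    ∀ b, x ≤ b → b ∈ Finset.univ.filter (fun x => a ≤ x) := by
  intro x hx b hxb
  simp only [Finset.mem_filter, Finset.mem_univ, true_and] at *
  exact le_trans hx hxb

lemma upper_gt (a : A) : ∀ x ∈ Finset.univ.filter (fun x => a < x),
    ∀ b, x ≤ b → b ∈ Finset.univ.filter (fun x => a < x) := by
  intro x hx b hxb
  simp only [Finset.mem_filter, Finset.mem_univ, true_and] at *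
  exact lt_of_lt_of_le hx hxb

lemma sum_ge_split (f : A → ℝ) (a : A) :
    ∑ x ∈ Finset.univ.filter (fun x => a ≤ x), f x
      = f a + ∑ x ∈ Finset.univ.filter (fun x => a < x), f x := by
  have h : Finset.univ.filter (fun x => a ≤ x)
      = insert a (Finset.univ.filter (fun x => a < x)) := by
    ext x
    simp only [Finset.mem_filter, Finset.mem_univ, true_and, Finset.mem_insert]
    constructor
    · intro h; rcases eq_or_lt_of_le h with h' | h'
      · exact Or.inl h'.symm
      · exact Or.inr h'
    · rintro (rfl | h); · exact le_refl _
      · exact le_of_lt h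
  rw [h, Finset.sum_insert (by simp)]

lemma diff_le_sum_abs (f g : A → ℝ) (U : Finset A) :
    ∑ x ∈ U, g x - ∑ x ∈ U, f x ≤ ∑ x, |f x - g x| := by
  rw [← Finset.sum_sub_distrib]
  calc ∑ x ∈ U, (g x - f x) ≤ ∑ x ∈ U, |f x - g x| := by
        apply Finset.sum_le_sum
        intro i _
        rw [abs_sub_comm]
        exact le_abs_self _
    _ ≤ ∑ x, |f x - g x| :=
        Finset.sum_le_sum_of_subset_of_nonneg (Finset.subset_univ _)
          (fun i _ _ => abs_nonneg _)

end Aux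

/-- Squeezing lemma: if ρₙ ≤ σₙ ≤ ρ̂ₙ stochastically and d(ρₙ, ρ̂ₙ) → 0 in total
variation, then d(σₙ, ρₙ) → 0. -/
theorem squeeze_in_total_variation
    {A : Type*} [Fintype A] [PartialOrder A]
    (rho hatrho sigma : ℕ → A → ℝ)
    (hrho : ∀ n, (∀ a, 0 ≤ rho n a) ∧ ∑ a, rho n a = 1)
    (hhatrho : ∀ n, (∀ a, 0 ≤ hatrho n a) ∧ ∑ a, hatrho n a = 1)
    (hsigma : ∀ n, (∀ a, 0 ≤ sigma n a) ∧ ∑ a, sigma n a = 1)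
    (hle : ∀ n, ∀ U : Finset A, (∀ a ∈ U, ∀ b, a ≤ b → b ∈ U) →
      ∑ a ∈ U, rho n a ≤ ∑ a ∈ U, hatrho n a)
    (hle1 : ∀ n, ∀ U : Finset A, (∀ a ∈ U, ∀ b, a ≤ b → b ∈ U) →
      ∑ a ∈ U, rho n a ≤ ∑ a ∈ U, sigma n a)
    (hle2 : ∀ n, ∀ U : Finset A, (∀ a ∈ U, ∀ b, a ≤ b → b ∈ U) →
      ∑ a ∈ U, sigma n a ≤ ∑ a ∈ U, hatrho n a)
    (hd : Filter.Tendsto (fun n => (1 / 2 : ℝ) * ∑ a, |rho n a - hatrho n a|)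
      Filter.atTop (nhds 0)) :
    Filter.Tendsto (fun n => (1 / 2 : ℝ) * ∑ a, |sigma n a - rho n a|)
      Filter.atTop (nhds 0) := by
  classical
  -- pointwise bound: |σ n a - ρ n a| ≤ ∑ |ρ - ρ̂|
  have key : ∀ n a, |sigma n a - rho n a| ≤ ∑ x, |rho n x - hatrho n x| := by
    intro n a
    set Uge := Finset.univ.filter (fun x => a ≤ x)
    set Ugt := Finset.univ.filter (fun x => a < x)
    have h1 : ∑ x ∈ Uge, rho n x ≤ ∑ x ∈ Uge, sigma n x := hle1 n Uge (upper_ge a)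
    have h2 : ∑ x ∈ Uge, sigma n x ≤ ∑ x ∈ Uge, hatrho n x := hle2 n Uge (upper_ge a)
    have h3 : ∑ x ∈ Ugt, rho n x ≤ ∑ x ∈ Ugt, sigma n x := hle1 n Ugt (upper_gt a)
    have h4 : ∑ x ∈ Ugt, sigma n x ≤ ∑ x ∈ Ugt, hatrho n x := hle2 n Ugt (upper_gt a)
    have e1 := sum_ge_split (sigma n) a
    have e2 := sum_ge_split (rho n) a
    have b1 : ∑ x ∈ Uge, hatrho n x - ∑ x ∈ Uge, rho n x ≤ ∑ x, |rho n x - hatrho n x| :=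
      diff_le_sum_abs (rho n) (hatrho n) Uge
    have b2 : ∑ x ∈ Ugt, hatrho n x - ∑ x ∈ Ugt, rho n x ≤ ∑ x, |rho n x - hatrho n x| :=
      diff_le_sum_abs (rho n) (hatrho n) Ugt
    rw [abs_le]
    constructor <;> nlinarith [e1, e2]
  have hbound : ∀ n, (1 / 2 : ℝ) * ∑ a, |sigma n a - rho n a|
      ≤ (Fintype.card A : ℝ) * ((1 / 2 : ℝ) * ∑ a, |rho n a - hatrho n a|) := by
    intro n
    have : ∑ a, |sigma n a - rho n a| ≤ ∑ _a : A, ∑ x, |rho n x - hatrho n x| :=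
      Finset.sum_le_sum (fun a _ => key n a)
    rw [Finset.sum_const, Finset.card_univ, nsmul_eq_mul] at this
    nlinarith
  have hpos : ∀ n, 0 ≤ (1 / 2 : ℝ) * ∑ a, |sigma n a - rho n a| := by
    intro n
    positivity
  have htend : Filter.Tendsto
      (fun n => (Fintype.card A : ℝ) * ((1 / 2 : ℝ) * ∑ a, |rho n a - hatrho n a|))
      Filter.atTop (nhds 0) := by
    have := hd.const_mul (Fintype.card A : ℝ)
    simpa using this
  exact squeeze_zero hpos hbound htend
end
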